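/- arXiv:2507.03962 — 2 statements merged into one kernel-verified Lean document; each statement's English description precedes it below -/
import Mathlib

section
/- Let M ∈ ℝ^{N×N} be any matrix, and define the vector field V(R) = -M R ψ∞(R) on B, where (MR)_i = Σ_j M_{ij} R_j. Then for all indices l, m ∈ {1,…,N}, ∫_B div_R(V)(R) · R_l R_m dR = (∫_B R₁² ψ∞(R) dR) · (M_{lm} + M_{ml}). In particular, the second-moment pairing of the linear drag term div_R(-M R ψ∞) reproduces exactly twice the symmetric part of M times the constant 𝓒 := 2 ∫_B R₁² ψ∞ dR. (Moment identity underlying the enhanced dissipation of the velocity.) -/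
open MeasureTheory
noncomputable section

/-- The open unit ball `B = B(0,1)` in `ℝ^N`. -/
def ball1 (N : ℕ) : Set (EuclideanSpace ℝ (Fin N)) := Metric.ball 0 1

/-- The FENEuc equilibrium density `ψ∞(R) = (1-|R|²)^k / ∫_B (1-|R'|²)^k dR'`. -/
def psiInf (N : ℕ) (k : ℝ) (R : EuclideanSpace ℝ (Fin N)) : ℝ :=
  (1 - ‖R‖ ^ 2) ^ k / ∫ R' in ball1 N, (1 - ‖R'‖ ^ 2) ^ k

namespace FeneAux

variable {N : ℕ}

/-- abbreviation for Euclidean space -/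
abbrev Euc (N : ℕ) := EuclideanSpace ℝ (Fin N)

/-- `w k R = (1-|R|²)^k`. -/
def w (k : ℝ) (R : Euc N) : ℝ := (1 - ‖R‖ ^ 2) ^ k

/-- `wd k i R = ∂ᵢ (w k) R`. -/
def wd (k : ℝ) (i : Fin N) (R : Euc N) : ℝ := k * (1 - ‖R‖ ^ 2) ^ (k - 1) * (-2 * R i)

lemma normSq (R : Euc N) : ‖R‖ ^ 2 = ∑ j, R j ^ 2 := by
  rw [EuclideanSpace.norm_eq, Real.sq_sqrt (by positivity)]
  simp [sq_abs]

lemma norm_lt_one_iff (R : Euc N) : ‖R‖ < 1 ↔ ‖R‖ ^ 2 < 1 := by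
  constructor
  · intro h; nlinarith [norm_nonneg R]
  · intro h; nlinarith [norm_nonneg R]

lemma abs_coord_le_norm (R : Euc N) (i : Fin N) : |R i| ≤ ‖R‖ := by
  have h1 : (R i) ^ 2 ≤ ∑ j, R j ^ 2 :=
    Finset.single_le_sum (f := fun j => R j ^ 2) (fun j _ => sq_nonneg _) (Finset.mem_univ i)
  rw [← normSq] at h1
  calc |R i| = Real.sqrt ((R i) ^ 2) := (Real.sqrt_sq_eq_abs _).symm
    _ ≤ Real.sqrt (‖R‖ ^ 2) := Real.sqrt_le_sqrt h1
    _ = ‖R‖ := by rw [Real.sqrt_sq (norm_nonneg _)]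

lemma cont_coord (i : Fin N) : Continuous (fun R : Euc N => R i) := by
  have : (fun R : Euc N => R i) = fun R => EuclideanSpace.proj (𝕜 := ℝ) i R := rfl
  rw [this]; exact (EuclideanSpace.proj (𝕜 := ℝ) i).continuous

lemma continuous_w {k : ℝ} (hk : 0 < k) : Continuous (w (N := N) k) := by
  apply continuous_iff_continuousAt.2
  intro R
  exact (Real.continuousAt_rpow_const _ _ (Or.inr hk.le)).comp
    ((continuous_const.sub (continuous_norm.pow 2)).continuousAt)

lemma w_nonneg {k : ℝ} {R : Euc N} (hR : ‖R‖ < 1) : 0 ≤ w k R := by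
  have : (0:ℝ) < 1 - ‖R‖ ^ 2 := by
    have := (norm_lt_one_iff R).1 hR; linarith
  exact Real.rpow_nonneg this.le _

lemma w_le_one {k : ℝ} (hk : 0 < k) {R : Euc N} (hR : ‖R‖ < 1) : w k R ≤ 1 := by
  have h1 : (0:ℝ) < 1 - ‖R‖ ^ 2 := by
    have := (norm_lt_one_iff R).1 hR; linarith
  exact Real.rpow_le_one h1.le (by nlinarith [sq_nonneg ‖R‖]) hk.le

lemma hasFDerivAt_w {k : ℝ} {R : Euc N} (hR : ‖R‖ < 1) :
    HasFDerivAt (w (N := N) k)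
      ((k * (1 - ‖R‖ ^ 2) ^ (k - 1)) • (-((2:ℝ) • (innerSL ℝ R)))) R := by
  have h2 : ((2:ℕ) • (innerSL ℝ R)) = ((2:ℝ) • (innerSL ℝ R)) := by
    ext x; simp
  have hbase : HasFDerivAt (fun x : Euc N => 1 - ‖x‖ ^ 2) (-((2:ℝ) • (innerSL ℝ R))) R := by
    rw [← h2]
    exact ((hasStrictFDerivAt_norm_sq R).hasFDerivAt).const_sub 1
  have hne : (1 - ‖R‖ ^ 2) ≠ 0 := by
    have := (norm_lt_one_iff R).1 hR; intro h; nlinarith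
  exact hbase.rpow_const (Or.inl hne)

lemma wCLM_apply {k : ℝ} (R : Euc N) (i : Fin N) :
    ((k * (1 - ‖R‖ ^ 2) ^ (k - 1)) • (-((2:ℝ) • (innerSL ℝ R))))
      (EuclideanSpace.single i 1) = wd k i R := by
  have h1 : (innerSL ℝ R) (EuclideanSpace.single i 1) = R i := by
    simp [EuclideanSpace.inner_single_right]
  simp only [ContinuousLinearMap.smul_apply, ContinuousLinearMap.neg_apply, h1, smul_eq_mul, wd]
  ring

/-- derivative of `w` along a coordinate direction, as `HasDerivAt` for the sliced map. -/
lemma hasDerivAt_w_line {k : ℝ} {R : Euc N} (hR : ‖R‖ < 1) (i : Fin N)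
    {γ : ℝ → Euc N} {t : ℝ} (hγt : γ t = R) (hγ : HasDerivAt γ (EuclideanSpace.single i 1) t) :
    HasDerivAt (fun s => w k (γ s)) (wd k i R) t := by
  subst hγt
  have := (hasFDerivAt_w (k := k) hR).comp_hasDerivAt t hγ
  rwa [wCLM_apply] at this

end FeneAux

namespace FeneAux

open scoped ENNReal

/-- 1D integrability of `(1-r)^α` on `(0,1)` for `α > -1` -/
lemma oneD {α : ℝ} (hα : -1 < α) :
    IntegrableOn (fun r : ℝ => (1 - r) ^ α) (Set.Ioo (0:ℝ) 1) volume := by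
  have h1 : IntervalIntegrable (fun x : ℝ => x ^ α) volume 0 1 :=
    intervalIntegral.intervalIntegrable_rpow' hα
  have h2 := h1.comp_sub_left 1
  simp only [sub_zero, sub_self] at h2
  have h3 : IntervalIntegrable (fun x : ℝ => (1 - x) ^ α) volume 0 1 := h2.symm
  exact (intervalIntegrable_iff_integrableOn_Ioo_of_le zero_le_one).1 h3

lemma radial_integrableOn {n : ℕ} (hn : 0 < n) {α : ℝ} (hα : -1 < α) :
    IntegrableOn (fun R : Euc n => (1 - ‖R‖ ^ 2) ^ α) (Metric.ball 0 1) volume := by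
  haveI : Nontrivial (Euc n) := by
    apply Module.nontrivial_of_finrank_pos (R := ℝ)
    rw [finrank_euclideanSpace_fin]; exact hn
  set Cα : ℝ := max 1 (2 ^ α) with hCα
  have hCα0 : 0 ≤ Cα := le_trans zero_le_one (le_max_left _ _)
  -- the radial profile
  set G : ℝ → ℝ≥0∞ := fun r => if r < 1 then ENNReal.ofReal ((1 - r ^ 2) ^ α) else 0 with hG
  have hGmeas : Measurable G := by
    apply Measurable.ite measurableSet_Iio _ measurable_const
    apply ENNReal.measurable_ofReal.comp
    measurability
  constructor
  · -- a.e. strong measurability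
    apply ContinuousOn.aestronglyMeasurable _ measurableSet_ball
    intro R hR
    have hR' : ‖R‖ < 1 := mem_ball_zero_iff.1 hR
    have hpos : (0:ℝ) < 1 - ‖R‖ ^ 2 := by nlinarith [norm_nonneg R]
    apply ContinuousAt.continuousWithinAt
    exact ContinuousAt.rpow_const ((continuous_const.sub (continuous_norm.pow 2)).continuousAt)
      (Or.inl hpos.ne')
  · -- finite integral
    rw [hasFiniteIntegral_iff_norm]
    have hind : ∀ x : Euc n, (Metric.ball (0 : Euc n) 1).indicator
        (fun R => ENNReal.ofReal ‖(1 - ‖R‖ ^ 2) ^ α‖) x = G ‖x‖ := by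
      intro x
      by_cases hx : x ∈ Metric.ball (0 : Euc n) 1
      · have hx' : ‖x‖ < 1 := mem_ball_zero_iff.1 hx
        have hpos : (0:ℝ) < 1 - ‖x‖ ^ 2 := by nlinarith [norm_nonneg x]
        rw [Set.indicator_of_mem hx, hG]
        simp only [if_pos hx']
        rw [Real.norm_eq_abs, abs_of_nonneg (Real.rpow_nonneg hpos.le _)]
      · have hx' : ¬ (‖x‖ < 1) := by
          simpa [mem_ball_zero_iff] using hx
        rw [Set.indicator_of_notMem hx, hG]
        simp [if_neg hx']
    calc ∫⁻ a in Metric.ball (0 : Euc n) 1, ENNReal.ofReal ‖(1 - ‖a‖ ^ 2) ^ α‖ ∂volume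
        = ∫⁻ a, (Metric.ball (0 : Euc n) 1).indicator
            (fun R => ENNReal.ofReal ‖(1 - ‖R‖ ^ 2) ^ α‖) a ∂volume := by
          rw [lintegral_indicator measurableSet_ball]
      _ = ∫⁻ a, G ‖a‖ ∂volume := by
          exact lintegral_congr hind
      _ < ⊤ := by
        -- pass to sphere × radius coordinates
        have hres : ∫⁻ a, G ‖a‖ ∂(volume : Measure (Euc n))
            = ∫⁻ a, G ‖a‖ ∂((volume : Measure (Euc n)).restrict ({(0:Euc n)}ᶜ)) := by
          rw [MeasureTheory.restrict_compl_singleton]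
        rw [hres, ← lintegral_subtype_comap (measurableSet_singleton (0 : Euc n)).compl]
        have hmp := (volume : Measure (Euc n)).measurePreserving_homeomorphUnitSphereProd
        have hle := hmp.lintegral_comp_emb
          (Homeomorph.measurableEmbedding _) (fun p => G p.2.1)
        have heq : ∀ a : ({(0:Euc n)}ᶜ : Set (Euc n)),
            G ((homeomorphUnitSphereProd (Euc n)) a).2.1 = G ‖(a : Euc n)‖ := by
          intro a; show G (‖(a : Euc n)‖ / 1) = _; rw [div_one]
        rw [← lintegral_congr heq, hle]
        -- now a product integral
        have hfin1 : (volume : Measure (Euc n)).toSphere Set.univ < ⊤ := measure_lt_top _ _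
        set m := Module.finrank ℝ (Euc n) - 1 with hm
        have hinner : ∫⁻ (r : Set.Ioi (0:ℝ)), G r.1 ∂(Measure.volumeIoiPow m) < ⊤ := by
          rw [Measure.volumeIoiPow, lintegral_withDensity_eq_lintegral_mul _
            ((measurable_subtype_coe.pow_const m).ennreal_ofReal)
            (show Measurable fun r : Set.Ioi (0:ℝ) => G r.1 from hGmeas.comp measurable_subtype_coe)]
          have : ∫⁻ (r : Set.Ioi (0:ℝ)),
              (fun r : Set.Ioi (0:ℝ) => ENNReal.ofReal (r.1 ^ m) * G r.1) r
                ∂(Measure.comap Subtype.val volume)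
              = ∫⁻ r in Set.Ioi (0:ℝ), ENNReal.ofReal (r ^ m) * G r ∂volume := by
            exact lintegral_subtype_comap (measurableSet_Ioi (a := (0:ℝ)))
              (fun r => ENNReal.ofReal (r ^ m) * G r)
          rw [show (fun r : Set.Ioi (0:ℝ) => ENNReal.ofReal (r.1 ^ m)) * (fun r => G r.1)
            = fun r : Set.Ioi (0:ℝ) => ENNReal.ofReal (r.1 ^ m) * G r.1 from rfl, this]
          -- bound pointwise
          have hbound : ∀ r ∈ Set.Ioi (0:ℝ), ENNReal.ofReal (r ^ m) * G r
              ≤ (Set.Ioo (0:ℝ) 1).indicator (fun r => ENNReal.ofReal (Cα * (1 - r) ^ α)) r := by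
            intro r hr
            rcases lt_or_ge r 1 with h1 | h1
            · have hr0 : (0:ℝ) < r := hr
              have hmem : r ∈ Set.Ioo (0:ℝ) 1 := ⟨hr0, h1⟩
              rw [Set.indicator_of_mem hmem, hG]
              simp only [if_pos h1]
              rw [← ENNReal.ofReal_mul (by positivity)]
              apply ENNReal.ofReal_le_ofReal
              have hfac : (1 - r ^ 2) = (1 - r) * (1 + r) := by ring
              have h1r : (0:ℝ) ≤ 1 - r := by linarith
              have h2r : (0:ℝ) ≤ 1 + r := by linarith
              have hsplit : (1 - r ^ 2) ^ α = (1 - r) ^ α * (1 + r) ^ α := by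
                rw [hfac, Real.mul_rpow h1r h2r]
              have hple : r ^ m ≤ 1 := pow_le_one₀ hr0.le h1.le
              have h1pr : (1 + r) ^ α ≤ Cα := by
                rcases le_or_gt 0 α with hα0 | hα0
                · calc (1 + r) ^ α ≤ 2 ^ α := by
                        apply Real.rpow_le_rpow h2r (by linarith) hα0
                    _ ≤ Cα := le_max_right _ _
                · calc (1 + r) ^ α ≤ 1 := by
                        apply Real.rpow_le_one_of_one_le_of_nonpos (by linarith) hα0.le
                    _ ≤ Cα := le_max_left _ _
              calc r ^ m * (1 - r ^ 2) ^ α ≤ 1 * (1 - r ^ 2) ^ α := by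
                    apply mul_le_mul_of_nonneg_right hple (Real.rpow_nonneg (by nlinarith) _)
                _ = (1 - r) ^ α * (1 + r) ^ α := by rw [one_mul, hsplit]
                _ ≤ (1 - r) ^ α * Cα := by
                    apply mul_le_mul_of_nonneg_left h1pr (Real.rpow_nonneg h1r _)
                _ = Cα * (1 - r) ^ α := by ring
            · rw [hG]; simp only [if_neg (not_lt.2 h1), mul_zero]
              exact zero_le
          calc ∫⁻ (r : ℝ) in Set.Ioi (0:ℝ), ENNReal.ofReal (r ^ m) * G r ∂volume
              ≤ ∫⁻ r in Set.Ioi (0:ℝ), (Set.Ioo (0:ℝ) 1).indicator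
                  (fun r => ENNReal.ofReal (Cα * (1 - r) ^ α)) r ∂volume := by
                apply setLIntegral_mono' measurableSet_Ioi hbound
            _ ≤ ∫⁻ r, (Set.Ioo (0:ℝ) 1).indicator
                  (fun r => ENNReal.ofReal (Cα * (1 - r) ^ α)) r ∂volume :=
                setLIntegral_le_lintegral _ _
            _ = ∫⁻ r in Set.Ioo (0:ℝ) 1, ENNReal.ofReal (Cα * (1 - r) ^ α) ∂volume := by
                rw [lintegral_indicator measurableSet_Ioo]
            _ < ⊤ := ((oneD hα).const_mul Cα).lintegral_lt_top
        calc ∫⁻ (b : ↑(Metric.sphere (0:Euc n) 1) × ↑(Set.Ioi (0:ℝ))), G b.2.1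
              ∂((volume : Measure (Euc n)).toSphere.prod (Measure.volumeIoiPow m))
            = ∫⁻ _x, (∫⁻ r, G r.1 ∂(Measure.volumeIoiPow m))
                ∂(volume : Measure (Euc n)).toSphere :=
              lintegral_prod _
                ((hGmeas.comp (measurable_subtype_coe.comp measurable_snd)).aemeasurable)
          _ = (∫⁻ r, G r.1 ∂(Measure.volumeIoiPow m)) * (volume : Measure (Euc n)).toSphere Set.univ :=
              lintegral_const _
          _ < ⊤ := ENNReal.mul_lt_top hinner hfin1

/-- bounded × `w` is integrable on the ball -/
lemma integrableOn_w_mul {n : ℕ} {k : ℝ} (hk : 0 < k) {g : (Euc n) → ℝ} (hg : Continuous g) :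
    IntegrableOn (fun R => w k R * g R) (Metric.ball (0 : Euc n) 1) volume := by
  obtain ⟨C, hC⟩ := (isCompact_closedBall (0 : Euc n) 1).exists_bound_of_continuousOn
    hg.continuousOn
  apply Integrable.mono' ((integrableOn_const_iff (C := C)).2 (Or.inr measure_ball_lt_top))
  · exact (((continuous_w hk).mul hg).aestronglyMeasurable).restrict
  · filter_upwards [ae_restrict_mem measurableSet_ball] with R hR
    have hR' : ‖R‖ < 1 := mem_ball_zero_iff.1 hR
    have h1 := hC R (Metric.ball_subset_closedBall hR)
    have h2 : ‖g R‖ ≤ C := h1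
    have h3 : (0:ℝ) ≤ C := le_trans (norm_nonneg _) h2
    rw [norm_mul, Real.norm_eq_abs (w k R), abs_of_nonneg (w_nonneg hR')]
    calc w k R * ‖g R‖ ≤ 1 * C := by
          apply mul_le_mul (w_le_one hk hR') h2 (norm_nonneg _) zero_le_one
      _ = C := one_mul C

/-- bounded × `wd` is integrable on the ball -/
lemma integrableOn_wd_mul {n : ℕ} (hn : 0 < n) {k : ℝ} (hk : 0 < k) (i : Fin n)
    {g : (Euc n) → ℝ} (hg : Continuous g) :
    IntegrableOn (fun R => wd k i R * g R) (Metric.ball (0 : Euc n) 1) volume := by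
  obtain ⟨C, hC⟩ := (isCompact_closedBall (0 : Euc n) 1).exists_bound_of_continuousOn
    hg.continuousOn
  have hC0 : 0 ≤ C := le_trans (norm_nonneg _) (hC 0 (by simp))
  have hk1 : (-1:ℝ) < k - 1 := by linarith
  apply Integrable.mono' ((radial_integrableOn hn hk1).const_mul (2 * k * C))
  · apply ContinuousOn.aestronglyMeasurable _ measurableSet_ball
    apply ContinuousOn.mul _ hg.continuousOn
    intro R hR
    have hR' : ‖R‖ < 1 := mem_ball_zero_iff.1 hR
    have hpos : (0:ℝ) < 1 - ‖R‖ ^ 2 := by nlinarith [norm_nonneg R]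
    apply ContinuousWithinAt.mul
    · apply ContinuousWithinAt.mul continuousWithinAt_const
      apply ContinuousAt.continuousWithinAt
      exact ContinuousAt.rpow_const ((continuous_const.sub (continuous_norm.pow 2)).continuousAt)
        (Or.inl hpos.ne')
    · exact ((continuous_const.mul (cont_coord i)).continuousAt).continuousWithinAt
  · filter_upwards [ae_restrict_mem measurableSet_ball] with R hR
    have hR' : ‖R‖ < 1 := mem_ball_zero_iff.1 hR
    have hpos : (0:ℝ) < 1 - ‖R‖ ^ 2 := by nlinarith [norm_nonneg R]
    have hA : (0:ℝ) ≤ (1 - ‖R‖ ^ 2) ^ (k - 1) := Real.rpow_nonneg hpos.le _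
    have hg' : ‖g R‖ ≤ C := hC R (Metric.ball_subset_closedBall hR)
    have hRi : |R i| ≤ 1 := le_trans (abs_coord_le_norm R i) hR'.le
    rw [norm_mul, wd, Real.norm_eq_abs]
    rw [abs_mul, abs_mul, abs_of_nonneg hk.le, abs_of_nonneg hA]
    have h2Ri : |(-2 * R i)| = 2 * |R i| := by rw [abs_mul]; simp
    rw [h2Ri]
    have hgn : (0:ℝ) ≤ ‖g R‖ := norm_nonneg _
    have hRi0 : (0:ℝ) ≤ |R i| := abs_nonneg _
    calc k * (1 - ‖R‖ ^ 2) ^ (k - 1) * (2 * |R i|) * ‖g R‖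
        ≤ k * (1 - ‖R‖ ^ 2) ^ (k - 1) * (2 * 1) * C := by
          apply mul_le_mul _ hg' hgn
          · positivity
          · apply mul_le_mul_of_nonneg_left _ (by positivity)
            linarith
      _ = 2 * k * C * (1 - ‖R‖ ^ 2) ^ (k - 1) := by ring

/-- Key divergence identity: the integral over the unit ball of the `i`-th partial
derivative of `w k * g` vanishes. -/
lemma keydiv {n : ℕ} {k : ℝ} (hk : 0 < k) (i : Fin (n+1)) (g dg : (Euc (n+1)) → ℝ)
    (hg : Continuous g)
    (hder : ∀ R : Euc (n+1), HasDerivAt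
      (fun t : ℝ => g (R + t • (EuclideanSpace.single i (1:ℝ)))) (dg R) 0)
    (hint : IntegrableOn (fun R => wd k i R * g R + w k R * dg R)
      (Metric.ball (0 : Euc (n+1)) 1) volume) :
    ∫ R in Metric.ball (0 : Euc (n+1)) 1, (wd k i R * g R + w k R * dg R) = 0 := by
  classical
  set φ : Euc (n+1) → ℝ := fun R => wd k i R * g R + w k R * dg R with hφ
  set e : (Euc (n+1)) ≃ᵐ (ℝ × (Fin n → ℝ)) :=
    (MeasurableEquiv.toLp 2 (Fin (n+1) → ℝ)).symm.trans
      (MeasurableEquiv.piFinSuccAbove (fun _ => ℝ) i) with he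
  have hmp : MeasurePreserving e volume volume :=
    (volume_preserving_piFinSuccAbove (fun _ : Fin (n+1) => ℝ) i).comp
      (EuclideanSpace.volume_preserving_symm_measurableEquiv_toLp (Fin (n+1)))
  have hmps : MeasurePreserving (⇑e.symm) volume volume := hmp.symm e
  set e1 : Euc (n+1) := EuclideanSpace.single i (1:ℝ) with he1
  set γ : (Fin n → ℝ) → ℝ → Euc (n+1) := fun y t => e.symm (t, y) with hγdef
  have hcoordi : ∀ (t : ℝ) (y : Fin n → ℝ), γ y t i = t := by
    intro t y
    show (Fin.insertNthEquiv (fun _ => ℝ) i) (t, y) i = t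
    simp [Fin.insertNthEquiv]
  have hcoords : ∀ (t : ℝ) (y : Fin n → ℝ) (j : Fin n), γ y t (i.succAbove j) = y j := by
    intro t y j
    show (Fin.insertNthEquiv (fun _ => ℝ) i) (t, y) (i.succAbove j) = y j
    simp [Fin.insertNthEquiv]
  have haff : ∀ y t, γ y t = γ y 0 + t • e1 := by
    intro y t
    ext a
    have hadd : (γ y 0 + t • e1) a = γ y 0 a + t * (e1 a) := rfl
    rw [hadd]
    refine Fin.succAboveCases i ?_ ?_ a
    · rw [hcoordi, hcoordi, he1]
      simp [EuclideanSpace.single_apply]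
    · intro j
      rw [hcoords, hcoords, he1]
      simp [EuclideanSpace.single_apply, Fin.succAbove_ne i j]
  have hnorm : ∀ y t, ‖γ y t‖ ^ 2 = t ^ 2 + ∑ j, (y j) ^ 2 := by
    intro y t
    rw [normSq, Fin.sum_univ_succAbove (fun a => (γ y t a) ^ 2) i]
    congr 1
    · rw [hcoordi]
    · exact Finset.sum_congr rfl (fun j _ => by rw [hcoords])
  have hset : ∫ R in Metric.ball (0 : Euc (n+1)) 1, φ R
      = ∫ p in ((⇑e.symm) ⁻¹' (Metric.ball (0 : Euc (n+1)) 1)), φ (e.symm p) := by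
    rw [hmps.setIntegral_preimage_emb e.symm.measurableEmbedding φ _]
  set P := ((⇑e.symm) ⁻¹' (Metric.ball (0 : Euc (n+1)) 1)) with hP
  have hPmem : ∀ (t : ℝ) (y : Fin n → ℝ), ((t, y) ∈ P) ↔ t ^ 2 + ∑ j, (y j) ^ 2 < 1 := by
    intro t y
    rw [hP, Set.mem_preimage, mem_ball_zero_iff, norm_lt_one_iff]
    rw [show e.symm (t, y) = γ y t from rfl, hnorm]
  have hPmeas : MeasurableSet P := e.symm.measurable measurableSet_ball
  have hΦint : Integrable (P.indicator (fun p => φ (e.symm p))) volume := by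
    have h1 : Integrable ((Metric.ball (0 : Euc (n+1)) 1).indicator φ) volume :=
      (integrable_indicator_iff measurableSet_ball).2 hint
    have h2 := (hmps.integrable_comp_emb e.symm.measurableEmbedding).2 h1
    have h3 : ((Metric.ball (0 : Euc (n+1)) 1).indicator φ) ∘ (⇑e.symm)
        = P.indicator (fun p => φ (e.symm p)) := by
      funext p
      by_cases hp : p ∈ P
      · rw [Function.comp_apply, Set.indicator_of_mem hp,
          Set.indicator_of_mem (Set.mem_preimage.1 hp)]
      · rw [Function.comp_apply, Set.indicator_of_notMem hp,
          Set.indicator_of_notMem (fun hm => hp (Set.mem_preimage.2 hm))]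
    rwa [h3] at h2
  rw [hset, ← integral_indicator hPmeas]
  rw [Measure.volume_eq_prod] at hΦint ⊢
  rw [integral_prod_symm _ hΦint]
  have hae := hΦint.prod_left_ae
  have hzero : (fun y => ∫ t, P.indicator (fun p => φ (e.symm p)) (t, y)) =ᵐ[volume]
      (fun _ => (0:ℝ)) := by
    filter_upwards [hae] with y hy
    by_cases hQ1 : (∑ j, (y j) ^ 2) < 1
    case neg =>
      have hempty : ∀ t : ℝ, P.indicator (fun p => φ (e.symm p)) (t, y) = 0 := by
        intro t
        apply Set.indicator_of_notMem
        intro hmem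
        have := (hPmem t y).1 hmem
        nlinarith [sq_nonneg t]
      simp only [hempty, integral_zero]
    case pos =>
      set Q := ∑ j, (y j) ^ 2 with hQdef
      set c := Real.sqrt (1 - Q) with hcdef
      have hc2 : c ^ 2 = 1 - Q := Real.sq_sqrt (by linarith)
      have hcpos : 0 < c := Real.sqrt_pos.2 (by linarith)
      have hind : ∀ t, P.indicator (fun p => φ (e.symm p)) (t, y)
          = (Set.Ioo (-c) c).indicator (fun t => φ (γ y t)) t := by
        intro t
        have hmem' : ((t, y) ∈ P) ↔ t ∈ Set.Ioo (-c) c := by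
          rw [hPmem t y]
          constructor
          · intro h
            have ht2 : t ^ 2 < c ^ 2 := by rw [hc2]; linarith
            have := abs_lt_of_sq_lt_sq' ht2 hcpos.le
            exact Set.mem_Ioo.2 this
          · intro h
            rcases Set.mem_Ioo.1 h with ⟨h1, h2⟩
            have := sq_lt_sq' h1 h2
            rw [hc2] at this
            linarith
        by_cases hp : (t, y) ∈ P
        · rw [Set.indicator_of_mem hp, Set.indicator_of_mem (hmem'.1 hp)]
        · rw [Set.indicator_of_notMem hp,
            Set.indicator_of_notMem (fun hm => hp (hmem'.2 hm))]
      simp only [hind]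
      rw [integral_indicator measurableSet_Ioo]
      have hγcont : Continuous (γ y) := by
        rw [show (γ y) = fun t => γ y 0 + t • e1 from funext (haff y)]
        exact continuous_const.add (continuous_id.smul continuous_const)
      have hγder : ∀ t : ℝ, HasDerivAt (γ y) e1 t := by
        intro t
        rw [show (γ y) = fun t => γ y 0 + t • e1 from funext (haff y)]
        simpa using ((hasDerivAt_id t).smul_const e1).const_add (γ y 0)
      have hball : ∀ t ∈ Set.Ioo (-c) c, ‖γ y t‖ < 1 := by
        intro t ht
        rw [norm_lt_one_iff, hnorm]
        rcases Set.mem_Ioo.1 ht with ⟨h1, h2⟩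
        have := sq_lt_sq' h1 h2
        rw [hc2] at this
        linarith
      have hderH : ∀ t ∈ Set.Ioo (-c) c,
          HasDerivAt (fun s => w k (γ y s) * g (γ y s)) (φ (γ y t)) t := by
        intro t ht
        have hw := hasDerivAt_w_line (k := k) (hball t ht) i rfl (hγder t)
        have hgd : HasDerivAt (fun s => g (γ y s)) (dg (γ y t)) t := by
          set F : ℝ → ℝ := fun u => g (γ y t + u • e1) with hF
          have hshift : (fun s : ℝ => g (γ y s)) = fun s => F (s - t) := by
            funext s
            rw [hF]
            congr 1
            rw [haff y s, haff y t]
            module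
          rw [hshift]
          refine HasDerivAt.comp_sub_const (f := F) t t ?_
          rw [show (t - t : ℝ) = 0 by simp]
          exact hder (γ y t)
        exact hw.mul hgd
      have hw0 : ∀ t : ℝ, t ^ 2 + Q = 1 → w k (γ y t) * g (γ y t) = 0 := by
        intro t ht
        have hwc : w k (γ y t) = 0 := by
          rw [w, hnorm]
          rw [show (1:ℝ) - (t ^ 2 + ∑ j, (y j) ^ 2) = 0 by rw [← hQdef]; linarith]
          exact Real.zero_rpow hk.ne'
        rw [hwc, zero_mul]
      have hHcont : Continuous (fun t => w k (γ y t) * g (γ y t)) :=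
        ((continuous_w hk).comp hγcont).mul (hg.comp hγcont)
      have hii : IntervalIntegrable (fun t => φ (γ y t)) volume (-c) c := by
        rw [intervalIntegrable_iff_integrableOn_Ioo_of_le (by linarith)]
        rw [show (fun t => P.indicator (fun p => φ (e.symm p)) (t, y))
            = (Set.Ioo (-c) c).indicator (fun t => φ (γ y t)) from funext hind] at hy
        exact (integrable_indicator_iff measurableSet_Ioo).1 hy
      have hFTC := intervalIntegral.integral_eq_sub_of_hasDeriv_right_of_le (by linarith)
        hHcont.continuousOn (fun t ht => (hderH t ht).hasDerivWithinAt) hii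
      rw [hw0 c (by linarith), hw0 (-c) (by rw [neg_sq]; linarith), sub_zero] at hFTC
      rw [← MeasureTheory.integral_Ioc_eq_integral_Ioo,
        ← intervalIntegral.integral_of_le (by linarith : -c ≤ c)]
      exact hFTC
  rw [integral_congr_ae hzero]
  simp

/-- change of variables by a linear isometry preserves ball integrals -/
lemma changeVar {n : ℕ} (T : (Euc n) ≃ₗᵢ[ℝ] (Euc n)) (f : (Euc n) → ℝ) :
    ∫ R in Metric.ball (0 : Euc n) 1, f (T R) = ∫ R in Metric.ball (0 : Euc n) 1, f R := by
  have hball : T ⁻¹' (Metric.ball (0 : Euc n) 1) = Metric.ball (0 : Euc n) 1 := by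
    ext x
    simp [mem_ball_zero_iff, T.norm_map]
  have := T.measurePreserving.setIntegral_preimage_emb
    (T.toHomeomorph.measurableEmbedding) f (Metric.ball (0 : Euc n) 1)
  rwa [hball] at this

/-- the reflection in coordinate `a`, as a linear map -/
def reflLM (n : ℕ) (a : Fin n) : (Euc n) →ₗ[ℝ] (Euc n) where
  toFun x := WithLp.toLp 2 (fun b => if b = a then -(x b) else x b)
  map_add' x y := by
    ext b
    by_cases h : b = a <;> simp [h, PiLp.add_apply] <;> ring
  map_smul' r x := by
    ext b
    by_cases h : b = a <;> simp [h, PiLp.smul_apply, smul_eq_mul] <;> ring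

lemma reflLM_involutive (n : ℕ) (a : Fin n) : Function.Involutive (reflLM n a) := by
  intro x
  ext b
  by_cases h : b = a <;> simp [reflLM, h]

/-- the reflection in coordinate `a`, as a linear isometry equivalence -/
def reflIso (n : ℕ) (a : Fin n) : (Euc n) ≃ₗᵢ[ℝ] (Euc n) :=
  { LinearEquiv.ofInvolutive (reflLM n a) (reflLM_involutive n a) with
    norm_map' := by
      intro x
      rw [EuclideanSpace.norm_eq, EuclideanSpace.norm_eq]
      congr 1
      apply Finset.sum_congr rfl
      intro b _
      show ‖reflLM n a x b‖ ^ 2 = ‖x b‖ ^ 2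
      by_cases h : b = a <;> simp [reflLM, h] }

lemma reflIso_apply (n : ℕ) (a : Fin n) (R : Euc n) (b : Fin n) :
    reflIso n a R b = if b = a then -(R b) else R b := rfl

/-- moment integrals against `w` -/
lemma moment (n : ℕ) (hn : 0 < n) {k : ℝ} (hk : 0 < k) (a b : Fin n) :
    ∫ R in Metric.ball (0 : Euc n) 1, w k R * (R a * R b)
      = if a = b then
          ∫ R in Metric.ball (0 : Euc n) 1, w k R * (R ⟨0, hn⟩ * R ⟨0, hn⟩) else 0 := by
  by_cases hab : a = b
  · subst hab
    rw [if_pos rfl]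
    set z : Fin n := ⟨0, hn⟩ with hz
    set T : (Euc n) ≃ₗᵢ[ℝ] (Euc n) :=
      LinearIsometryEquiv.piLpCongrLeft 2 ℝ ℝ (Equiv.swap a z) with hT
    have hTz : ∀ R : Euc n, T R a = R z := by
      intro R
      show R ((Equiv.swap a z).symm a) = R z
      rw [Equiv.symm_swap, Equiv.swap_apply_left]
    have hkey := changeVar T (fun R => w k R * (R a * R a))
    have hptw : ∀ R : Euc n, w k (T R) * (T R a * T R a) = w k R * (R z * R z) := by
      intro R
      have hw : w k (T R) = w k R := by simp only [w, T.norm_map]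
      rw [hw, hTz]
    simp only [hptw] at hkey
    exact hkey.symm
  · rw [if_neg hab]
    set T : (Euc n) ≃ₗᵢ[ℝ] (Euc n) := reflIso n a with hT
    have hkey := changeVar T (fun R => w k R * (R a * R b))
    have hptw : ∀ R : Euc n, w k (T R) * (T R a * T R b) = -(w k R * (R a * R b)) := by
      intro R
      have hw : w k (T R) = w k R := by
        simp only [w, T.norm_map]
      have h1 : T R a = -(R a) := by rw [hT, reflIso_apply, if_pos rfl]
      have h2 : T R b = R b := by
        rw [hT, reflIso_apply, if_neg (Ne.symm hab)]
      rw [hw, h1, h2]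
      ring
    simp only [hptw] at hkey
    rw [integral_neg] at hkey
    linarith

end FeneAux

open FeneAux in
/-- Moment identity underlying the enhanced dissipation of the velocity: for any
matrix `M` and the vector field `V(R) = -M R ψ∞(R)`, one has
`∫_B div_R(V)(R) R_l R_m dR = (∫_B R₁² ψ∞ dR) (M_{lm} + M_{ml})`. -/
theorem drag_moment_identity (N : ℕ) (hN : 2 ≤ N) (k : ℝ) (hk : 0 < k)
    (M : Matrix (Fin N) (Fin N) ℝ) (l m : Fin N) :
    (∫ R in ball1 N,
        (∑ i : Fin N, fderiv ℝ (fun R' : EuclideanSpace ℝ (Fin N) =>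
            -(∑ j : Fin N, M i j * R' j) * psiInf N k R') R (EuclideanSpace.single i 1))
          * (R l * R m))
      = (∫ R in ball1 N, R (⟨0, by omega⟩ : Fin N) ^ 2 * psiInf N k R)
          * (M l m + M m l) := by
  classical
  obtain ⟨n, rfl⟩ : ∃ n, N = n + 1 := ⟨N - 1, by omega⟩
  have hn : 0 < n + 1 := Nat.succ_pos n
  simp only [ball1]
  set z : Fin (n+1) := ⟨0, hn⟩ with hz
  set Z : ℝ := ∫ R' in ball1 (n+1), (1 - ‖R'‖ ^ 2) ^ k with hZ
  set c : ℝ := Z⁻¹ with hc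
  have hpsi : ∀ R : Euc (n+1), psiInf (n+1) k R = w k R * c := by
    intro R
    simp only [psiInf]
    rw [← hZ, div_eq_mul_inv, ← hc]
    rfl
  have hscont : ∀ i : Fin (n+1), Continuous (fun R : Euc (n+1) => ∑ j, M i j * R j) :=
    fun i => continuous_finset_sum _ (fun j _ => continuous_const.mul (cont_coord j))
  have hlinD : ∀ (i : Fin (n+1)) (R : Euc (n+1)),
      HasFDerivAt (fun R' : Euc (n+1) => ∑ j, M i j * R' j)
        (∑ j, M i j • (EuclideanSpace.proj (𝕜 := ℝ) j)) R := by
    intro i R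
    exact HasFDerivAt.fun_sum
      (fun j _ => ((EuclideanSpace.proj (𝕜 := ℝ) j).hasFDerivAt).const_mul (M i j))
  have hproj : ∀ (a b : Fin (n+1)),
      (EuclideanSpace.proj (𝕜 := ℝ) a) (EuclideanSpace.single b (1:ℝ))
        = if a = b then (1:ℝ) else 0 := by
    intro a b
    show (EuclideanSpace.single b (1:ℝ)) a = _
    rw [EuclideanSpace.single_apply]
  have hlinval : ∀ (i i' : Fin (n+1)),
      (∑ j, M i j • (EuclideanSpace.proj (𝕜 := ℝ) j)) (EuclideanSpace.single i' 1) = M i i' := by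
    intro i i'
    rw [ContinuousLinearMap.sum_apply]
    calc ∑ j, (M i j • (EuclideanSpace.proj (𝕜 := ℝ) j)) (EuclideanSpace.single i' 1)
        = ∑ j, (if j = i' then M i j else 0) := by
          apply Finset.sum_congr rfl
          intro j _
          rw [ContinuousLinearMap.smul_apply, smul_eq_mul, hproj j i', mul_ite, mul_one, mul_zero]
      _ = M i i' := by rw [Finset.sum_ite_eq' Finset.univ i' (fun j => M i j)]; simp
  have hpsiD : ∀ R : Euc (n+1), ‖R‖ < 1 →
      HasFDerivAt (fun R' : Euc (n+1) => psiInf (n+1) k R')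
        (c • ((k * (1 - ‖R‖ ^ 2) ^ (k - 1)) • (-((2:ℝ) • (innerSL ℝ R))))) R := by
    intro R hR
    rw [show (fun R' : Euc (n+1) => psiInf (n+1) k R') = fun R' => w k R' * c from funext hpsi]
    exact (hasFDerivAt_w (k := k) hR).mul_const c
  have hfval : ∀ (i : Fin (n+1)) (R : Euc (n+1)), ‖R‖ < 1 →
      fderiv ℝ (fun R' : Euc (n+1) =>
          -(∑ j, M i j * R' j) * psiInf (n+1) k R') R (EuclideanSpace.single i 1)
        = -(M i i) * (w k R * c) + -(∑ j, M i j * R j) * (wd k i R * c) := by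
    intro i R hR
    have hD := ((hlinD i R).fun_neg).fun_mul (hpsiD R hR)
    have hwv : ((k * (1 - ‖R‖ ^ 2) ^ (k - 1)) • (-((2:ℝ) • (innerSL ℝ R))))
        (EuclideanSpace.single i 1) = wd k i R := wCLM_apply R i
    rw [hD.fderiv]
    rw [ContinuousLinearMap.add_apply, ContinuousLinearMap.smul_apply,
      ContinuousLinearMap.smul_apply, hwv, ContinuousLinearMap.smul_apply,
      ContinuousLinearMap.neg_apply, hlinval i i, hpsi R]
    simp only [smul_eq_mul]
    ring
  have hcong : ∀ R ∈ Metric.ball (0 : Euc (n+1)) 1,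
      ((∑ i, fderiv ℝ (fun R' : Euc (n+1) =>
          -(∑ j, M i j * R' j) * psiInf (n+1) k R') R (EuclideanSpace.single i 1))
        * (R l * R m))
      = c * ((∑ i, (wd k i R * (-(∑ j, M i j * R j) * (R l * R m))
              + w k R * (-(M i i) * (R l * R m)
                  + -(∑ j, M i j * R j) * ((if l = i then (1:ℝ) else 0) * R m
                      + (if m = i then (1:ℝ) else 0) * R l))))
          + w k R * ((∑ j, M l j * R j) * R m + (∑ j, M m j * R j) * R l)) := by
    intro R hR
    have hR' : ‖R‖ < 1 := mem_ball_zero_iff.1 hR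
    rw [Finset.sum_congr rfl (fun i _ => hfval i R hR')]
    have h2 : ∑ i, w k R * (-(∑ j, M i j * R j) * ((if l = i then (1:ℝ) else 0) * R m
          + (if m = i then (1:ℝ) else 0) * R l))
        = -(w k R * ((∑ j, M l j * R j) * R m)) - w k R * ((∑ j, M m j * R j) * R l) := by
      have hterm : ∀ i : Fin (n+1),
          w k R * (-(∑ j, M i j * R j) * ((if l = i then (1:ℝ) else 0) * R m
            + (if m = i then (1:ℝ) else 0) * R l))
          = (if l = i then -(w k R * ((∑ j, M i j * R j) * R m)) else 0)
            + (if m = i then -(w k R * ((∑ j, M i j * R j) * R l)) else 0) := by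
        intro i
        by_cases h1 : l = i <;> by_cases h2 : m = i <;> simp [h1, h2] <;> ring
      rw [Finset.sum_congr rfl (fun i _ => hterm i), Finset.sum_add_distrib,
        Finset.sum_ite_eq, Finset.sum_ite_eq]
      simp only [Finset.mem_univ, if_true]
      ring
    have h3 : ∑ i, (wd k i R * (-(∑ j, M i j * R j) * (R l * R m))
          + w k R * (-(M i i) * (R l * R m)
              + -(∑ j, M i j * R j) * ((if l = i then (1:ℝ) else 0) * R m
                  + (if m = i then (1:ℝ) else 0) * R l)))
        = (∑ i, (wd k i R * (-(∑ j, M i j * R j) * (R l * R m))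
            + w k R * (-(M i i) * (R l * R m))))
          + ∑ i, w k R * (-(∑ j, M i j * R j) * ((if l = i then (1:ℝ) else 0) * R m
              + (if m = i then (1:ℝ) else 0) * R l)) := by
      rw [← Finset.sum_add_distrib]
      apply Finset.sum_congr rfl
      intro i _
      ring
    rw [h3, h2, Finset.sum_mul]
    have h4 : ∑ i, ((-(M i i) * (w k R * c) + -(∑ j, M i j * R j) * (wd k i R * c))
          * (R l * R m))
        = c * (∑ i, (wd k i R * (-(∑ j, M i j * R j) * (R l * R m))
            + w k R * (-(M i i) * (R l * R m)))) := by
      rw [Finset.mul_sum]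
      apply Finset.sum_congr rfl
      intro i _
      ring
    rw [h4]
    ring
  rw [setIntegral_congr_fun measurableSet_ball hcong]
  rw [integral_const_mul]
  have hgicont : ∀ i : Fin (n+1),
      Continuous (fun R : Euc (n+1) => -(∑ j, M i j * R j) * (R l * R m)) :=
    fun i => ((hscont i).neg).mul ((cont_coord l).mul (cont_coord m))
  have hdgicont : ∀ i : Fin (n+1),
      Continuous (fun R : Euc (n+1) => -(M i i) * (R l * R m)
        + -(∑ j, M i j * R j) * ((if l = i then (1:ℝ) else 0) * R m
            + (if m = i then (1:ℝ) else 0) * R l)) :=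
    fun i => (continuous_const.mul ((cont_coord l).mul (cont_coord m))).add
      (((hscont i).neg).mul ((continuous_const.mul (cont_coord m)).add
        (continuous_const.mul (cont_coord l))))
  have hφint : ∀ i : Fin (n+1),
      IntegrableOn (fun R : Euc (n+1) => wd k i R * (-(∑ j, M i j * R j) * (R l * R m))
        + w k R * (-(M i i) * (R l * R m)
            + -(∑ j, M i j * R j) * ((if l = i then (1:ℝ) else 0) * R m
                + (if m = i then (1:ℝ) else 0) * R l)))
        (Metric.ball (0 : Euc (n+1)) 1) volume :=
    fun i => (integrableOn_wd_mul hn hk i (hgicont i)).add (integrableOn_w_mul hk (hdgicont i))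
  have hwpint : IntegrableOn (fun R : Euc (n+1) =>
      w k R * ((∑ j, M l j * R j) * R m + (∑ j, M m j * R j) * R l))
      (Metric.ball (0 : Euc (n+1)) 1) volume :=
    integrableOn_w_mul hk (((hscont l).mul (cont_coord m)).add ((hscont m).mul (cont_coord l)))
  rw [integral_add (integrable_finset_sum _ (fun i _ => hφint i)) hwpint]
  rw [integral_finset_sum _ (fun i _ => hφint i)]
  have hzero : ∀ i : Fin (n+1),
      ∫ R in Metric.ball (0 : Euc (n+1)) 1,
        (wd k i R * (-(∑ j, M i j * R j) * (R l * R m))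
          + w k R * (-(M i i) * (R l * R m)
              + -(∑ j, M i j * R j) * ((if l = i then (1:ℝ) else 0) * R m
                  + (if m = i then (1:ℝ) else 0) * R l))) = 0 := by
    intro i
    apply keydiv hk i _ _ (hgicont i) _ (hφint i)
    intro R
    have hline : HasDerivAt (fun t : ℝ => R + t • (EuclideanSpace.single i (1:ℝ)))
        (EuclideanSpace.single i (1:ℝ)) 0 := by
      simpa using ((hasDerivAt_id (0:ℝ)).smul_const (EuclideanSpace.single i (1:ℝ))).const_add R
    have hcoordD : HasFDerivAt (fun R' : Euc (n+1) => R' l * R' m)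
        ((R l) • (EuclideanSpace.proj (𝕜 := ℝ) m) + (R m) • (EuclideanSpace.proj (𝕜 := ℝ) l))
        R :=
      ((EuclideanSpace.proj (𝕜 := ℝ) l).hasFDerivAt (x := R)).mul
        ((EuclideanSpace.proj (𝕜 := ℝ) m).hasFDerivAt (x := R))
    have hgF := ((hlinD i R).fun_neg).fun_mul hcoordD
    have hgF' : HasFDerivAt (fun R' : Euc (n+1) => -(∑ j, M i j * R' j) * (R' l * R' m))
        ((-(∑ j, M i j * R j)) • ((R l) • (EuclideanSpace.proj (𝕜 := ℝ) m)
            + (R m) • (EuclideanSpace.proj (𝕜 := ℝ) l))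
          + (R l * R m) • (-(∑ j, M i j • (EuclideanSpace.proj (𝕜 := ℝ) j))))
        ((fun t : ℝ => R + t • (EuclideanSpace.single i (1:ℝ))) 0) := by
      rw [show (fun t : ℝ => R + t • (EuclideanSpace.single i (1:ℝ))) 0 = R by simp]
      exact hgF
    have hcomp := hgF'.comp_hasDerivAt 0 hline
    refine hcomp.congr_deriv ?_
    symm
    rw [ContinuousLinearMap.add_apply, ContinuousLinearMap.smul_apply,
      ContinuousLinearMap.smul_apply, ContinuousLinearMap.add_apply,
      ContinuousLinearMap.smul_apply, ContinuousLinearMap.smul_apply,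
      ContinuousLinearMap.neg_apply, hproj m i, hproj l i, hlinval i i]
    simp only [smul_eq_mul]
    ring
  rw [Finset.sum_congr rfl (fun i _ => hzero i), Finset.sum_const]
  simp only [smul_zero, zero_add]
  have hwp : ∫ R in Metric.ball (0 : Euc (n+1)) 1,
      w k R * ((∑ j, M l j * R j) * R m + (∑ j, M m j * R j) * R l)
      = (M l m + M m l) * (∫ R in Metric.ball (0 : Euc (n+1)) 1, w k R * (R z * R z)) := by
    have hsplit : ∀ R : Euc (n+1),
        w k R * ((∑ j, M l j * R j) * R m + (∑ j, M m j * R j) * R l)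
        = (∑ j, M l j * (w k R * (R j * R m))) + (∑ j, M m j * (w k R * (R j * R l))) := by
      intro R
      rw [mul_add]
      congr 1 <;>
        · rw [Finset.sum_mul, Finset.mul_sum]
          exact Finset.sum_congr rfl (fun j _ => by ring)
    simp only [hsplit]
    rw [integral_add
      (integrable_finset_sum _
        (fun j _ => (integrableOn_w_mul hk ((cont_coord j).fun_mul (cont_coord m))).const_mul (M l j)))
      (integrable_finset_sum _
        (fun j _ => (integrableOn_w_mul hk ((cont_coord j).fun_mul (cont_coord l))).const_mul (M m j)))]
    rw [integral_finset_sum _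
      (fun j _ => (integrableOn_w_mul hk ((cont_coord j).fun_mul (cont_coord m))).const_mul (M l j))]
    rw [integral_finset_sum _
      (fun j _ => (integrableOn_w_mul hk ((cont_coord j).fun_mul (cont_coord l))).const_mul (M m j))]
    simp only [integral_const_mul]
    have h1 : ∑ j, M l j * ∫ R in Metric.ball (0 : Euc (n+1)) 1, w k R * (R j * R m)
        = M l m * ∫ R in Metric.ball (0 : Euc (n+1)) 1, w k R * (R z * R z) := by
      rw [Finset.sum_congr rfl (fun j _ => by rw [moment (n+1) hn hk j m, mul_ite, mul_zero])]
      rw [Finset.sum_ite_eq' Finset.univ m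
        (fun j => M l j * ∫ R in Metric.ball (0 : Euc (n+1)) 1, w k R * (R z * R z))]
      simp
    have h2 : ∑ j, M m j * ∫ R in Metric.ball (0 : Euc (n+1)) 1, w k R * (R j * R l)
        = M m l * ∫ R in Metric.ball (0 : Euc (n+1)) 1, w k R * (R z * R z) := by
      rw [Finset.sum_congr rfl (fun j _ => by rw [moment (n+1) hn hk j l, mul_ite, mul_zero])]
      rw [Finset.sum_ite_eq' Finset.univ l
        (fun j => M m j * ∫ R in Metric.ball (0 : Euc (n+1)) 1, w k R * (R z * R z))]
      simp
    rw [h1, h2]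
    ring
  have hrhs : ∫ R in Metric.ball (0 : Euc (n+1)) 1, (R z) ^ 2 * psiInf (n+1) k R
      = c * ∫ R in Metric.ball (0 : Euc (n+1)) 1, w k R * (R z * R z) := by
    simp only [hpsi]
    rw [← integral_const_mul]
    apply integral_congr_ae (Filter.Eventually.of_forall (fun R => by ring))
  rw [hwp, hrhs]
  ring
end
end

section
/- Let u : ℝ^N → ℝ^N be smooth and compactly supported with div u = 0, and let ψ : ℝ^N × B → ℝ be such that (x,R) ↦ ψ(x,R)/ψ∞(R) is continuously differentiable and bounded together with its gradient, and is compactly supported in x. Then ∫_{ℝ^N} ∫_B div_R( -(∇u(x))R · ψ∞(R) ) · (ψ(x,R)/ψ∞(R)) dR dx = - ∫_{ℝ^N} (div τ)(x) · u(x) dx, where ((∇u)R)_i = Σ_j ∂_{x_j}u_i(x) R_j, τ_{lm}(x) = ∫_B R_l ∂_{R_m}U(R) ψ(x,R) dR and (div τ)_m = Σ_l ∂_{x_l} τ_{lm}. (Cancellation identity between the linear drag term and the stress term, used to close the L² energy estimate.) -/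
open MeasureTheory
noncomputable section

/-- Partial derivative `∂_i f(x)` of a scalar function on `ℝ^N`. -/
def pd (N : ℕ) (f : EuclideanSpace ℝ (Fin N) → ℝ) (x : EuclideanSpace ℝ (Fin N))
    (i : Fin N) : ℝ :=
  fderiv ℝ f x (EuclideanSpace.single i 1)

set_option maxHeartbeats 1000000

section AuxProofs

open Set Metric

lemma one_sub_pow_le_nat_mul (N : ℕ) {r : ℝ} (h0 : 0 ≤ r) (h1 : r ≤ 1) :
    1 - r ^ N ≤ N * (1 - r) := by
  induction N with
  | zero => simp
  | succ n ih =>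
    have hrn : r ^ n ≤ 1 := pow_le_one₀ h0 h1
    have : 1 - r ^ (n+1) = (1 - r ^ n) + r ^ n * (1 - r) := by ring
    rw [this]
    push_cast
    nlinarith

lemma integrableOn_one_sub_norm_rpow {N : ℕ} (hN : 0 < N) {e : ℝ} (he : -1 < e) :
    IntegrableOn (fun R : EuclideanSpace ℝ (Fin N) => (1 - ‖R‖) ^ e)
      (Metric.ball 0 1) := by
  haveI : Nontrivial (EuclideanSpace ℝ (Fin N)) := by
    have : 0 < Module.finrank ℝ (EuclideanSpace ℝ (Fin N)) := by
      simpa [finrank_euclideanSpace] using hN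
    exact Module.nontrivial_of_finrank_pos this
  set f : EuclideanSpace ℝ (Fin N) → ℝ := fun R => (1 - ‖R‖) ^ e with hf
  have hpos : ∀ R ∈ Metric.ball (0:EuclideanSpace ℝ (Fin N)) 1, (0:ℝ) < 1 - ‖R‖ := by
    intro R hR
    simp only [Metric.mem_ball, dist_zero_right] at hR
    linarith
  have hcont : ContinuousOn f (Metric.ball 0 1) := by
    apply ContinuousOn.rpow_const
    · exact (continuous_const.sub continuous_norm).continuousOn
    · intro R hR; exact Or.inl (hpos R hR).ne'
  have hmeas : AEStronglyMeasurable f (volume.restrict (Metric.ball 0 1)) :=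
    hcont.aestronglyMeasurable Metric.isOpen_ball.measurableSet
  have hnn : 0 ≤ᵐ[volume.restrict (Metric.ball (0:EuclideanSpace ℝ (Fin N)) 1)] f := by
    filter_upwards [ae_restrict_mem Metric.isOpen_ball.measurableSet] with R hR
    exact Real.rpow_nonneg (hpos R hR).le e
  rcases le_or_gt 0 e with h0 | h0
  · refine ⟨hmeas, HasFiniteIntegral.restrict_of_bounded (C := 1) measure_ball_lt_top ?_⟩
    filter_upwards [ae_restrict_mem Metric.isOpen_ball.measurableSet] with R hR
    have h1 : (0:ℝ) < 1 - ‖R‖ := hpos R hR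
    rw [Real.norm_eq_abs, abs_of_nonneg (Real.rpow_nonneg h1.le e)]
    apply Real.rpow_le_one h1.le (by linarith [norm_nonneg R]) h0
  refine ⟨hmeas, ?_⟩
  rw [hasFiniteIntegral_iff_ofReal hnn]
  rw [lintegral_eq_lintegral_meas_le _ hnn hmeas.aemeasurable]
  set μ := volume.restrict (Metric.ball (0:EuclideanSpace ℝ (Fin N)) 1) with hμ
  set mB := volume (Metric.ball (0:EuclideanSpace ℝ (Fin N)) 1) with hmB
  have hmB_lt : mB < ⊤ := measure_ball_lt_top
  have hinv : e⁻¹ < -1 := by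
    rw [inv_eq_one_div, div_lt_iff_of_neg h0]; linarith
  calc ∫⁻ t in Ioi (0:ℝ), μ {a | t ≤ f a}
      ≤ ∫⁻ t in Ioc (0:ℝ) 1 ∪ Ioi 1, μ {a | t ≤ f a} :=
        lintegral_mono_set Ioi_subset_Ioc_union_Ioi
    _ ≤ (∫⁻ t in Ioc (0:ℝ) 1, μ {a | t ≤ f a}) + ∫⁻ t in Ioi 1, μ {a | t ≤ f a} :=
        lintegral_union_le _ _ _
    _ < ⊤ := by
        refine ENNReal.add_lt_top.2 ⟨?_, ?_⟩
        · have hb : ∀ t : ℝ, μ {a | t ≤ f a} ≤ mB := by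
            intro t
            calc μ {a | t ≤ f a} ≤ μ univ := measure_mono (subset_univ _)
              _ = mB := by rw [hμ, Measure.restrict_apply_univ]
          calc ∫⁻ t in Ioc (0:ℝ) 1, μ {a | t ≤ f a} ≤ ∫⁻ _ in Ioc (0:ℝ) 1, mB :=
                lintegral_mono fun t => hb t
            _ = mB * volume (Ioc (0:ℝ) 1) := setLIntegral_const _ _
            _ < ⊤ := by
                apply ENNReal.mul_lt_top hmB_lt
                simp [Real.volume_Ioc]
        · have key : ∀ t ∈ Ioi (1:ℝ), μ {a | t ≤ f a} ≤
              ENNReal.ofReal ((N:ℝ) * t ^ e⁻¹) * mB := by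
            intro t ht
            have ht1 : (1:ℝ) < t := ht
            have ht0 : (0:ℝ) < t := by linarith
            set r : ℝ := 1 - t ^ e⁻¹ with hr
            have hte : (0:ℝ) < t ^ e⁻¹ := Real.rpow_pos_of_pos ht0 _
            have hte1 : t ^ e⁻¹ ≤ 1 := by
              apply Real.rpow_le_one_of_one_le_of_nonpos ht1.le
              linarith
            have hr0 : 0 ≤ r := by simp [hr]; linarith
            have hr1 : r < 1 := by simp [hr]; linarith
            have hsub : {a | t ≤ f a} ∩ Metric.ball 0 1 ⊆
                Metric.ball (0:EuclideanSpace ℝ (Fin N)) 1 \ Metric.ball 0 r := by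
              rintro a ⟨ha, hball⟩
              refine ⟨hball, ?_⟩
              simp only [Metric.mem_ball, dist_zero_right, not_lt]
              have hfa : t ≤ (1 - ‖a‖) ^ e := ha
              have h1a : (0:ℝ) < 1 - ‖a‖ := hpos a hball
              have : 1 - ‖a‖ ≤ t ^ e⁻¹ :=
                (Real.le_rpow_inv_iff_of_neg h1a ht0 h0).2 hfa
              simp only [hr]; linarith
            have hrestrict : μ {a | t ≤ f a} ≤
                volume (Metric.ball (0:EuclideanSpace ℝ (Fin N)) 1 \ Metric.ball 0 r) := by
              rw [hμ, Measure.restrict_apply' Metric.isOpen_ball.measurableSet]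
              exact measure_mono hsub
            have hdiff : volume (Metric.ball (0:EuclideanSpace ℝ (Fin N)) 1 \ Metric.ball 0 r)
                ≤ ENNReal.ofReal ((N:ℝ) * t ^ e⁻¹) * mB := by
              have hballr : volume (Metric.ball (0:EuclideanSpace ℝ (Fin N)) r) =
                  ENNReal.ofReal (r ^ N) * mB := by
                rw [Measure.addHaar_ball _ _ hr0, finrank_euclideanSpace, Fintype.card_fin]
              have h1 : volume (Metric.ball (0:EuclideanSpace ℝ (Fin N)) 1 \ Metric.ball 0 r)
                  = mB - volume (Metric.ball (0:EuclideanSpace ℝ (Fin N)) r) := by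
                rw [measure_diff (Metric.ball_subset_ball hr1.le)
                  Metric.isOpen_ball.measurableSet.nullMeasurableSet
                  measure_ball_lt_top.ne]
              rw [h1, hballr]
              rw [tsub_le_iff_right]
              calc mB = 1 * mB := (one_mul _).symm
                _ ≤ ENNReal.ofReal ((N:ℝ) * t ^ e⁻¹ + r ^ N) * mB := by
                    apply mul_le_mul_left
                    rw [← ENNReal.ofReal_one]
                    apply ENNReal.ofReal_le_ofReal
                    have := one_sub_pow_le_nat_mul N hr0 hr1.le
                    have h1r : 1 - r = t ^ e⁻¹ := by simp [hr]
                    rw [h1r] at this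
                    linarith
                _ = ENNReal.ofReal ((N:ℝ) * t ^ e⁻¹) * mB + ENNReal.ofReal (r ^ N) * mB := by
                    rw [ENNReal.ofReal_add (by positivity) (by positivity), add_mul]
            exact hrestrict.trans hdiff
          calc ∫⁻ t in Ioi (1:ℝ), μ {a | t ≤ f a}
              ≤ ∫⁻ t in Ioi (1:ℝ), ENNReal.ofReal ((N:ℝ) * t ^ e⁻¹) * mB :=
                setLIntegral_mono' measurableSet_Ioi key
            _ = (∫⁻ t in Ioi (1:ℝ), ENNReal.ofReal ((N:ℝ) * t ^ e⁻¹)) * mB :=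
                lintegral_mul_const' _ _ hmB_lt.ne
            _ < ⊤ := by
                apply ENNReal.mul_lt_top _ hmB_lt
                apply IntegrableOn.setLIntegral_lt_top
                exact (integrableOn_Ioi_rpow_of_lt hinv one_pos).const_mul _



section Aux

open Metric

variable {N : ℕ} {k : ℝ}

lemma mem_ball1 {R : EuclideanSpace ℝ (Fin N)} : R ∈ ball1 N ↔ ‖R‖ < 1 := by
  simp [ball1, Metric.mem_ball]

lemma one_sub_sq_pos {R : EuclideanSpace ℝ (Fin N)} (hR : R ∈ ball1 N) :
    (0:ℝ) < 1 - ‖R‖ ^ 2 := by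
  rw [mem_ball1] at hR
  nlinarith [norm_nonneg R]

lemma one_sub_sq_le_one {R : EuclideanSpace ℝ (Fin N)} : (1:ℝ) - ‖R‖ ^ 2 ≤ 1 := by
  nlinarith [norm_nonneg R]

lemma abs_coord_le_norm (R : EuclideanSpace ℝ (Fin N)) (i : Fin N) : |R i| ≤ ‖R‖ := by
  have h : |R i| = Real.sqrt ((R i)^2) := (Real.sqrt_sq_eq_abs _).symm
  rw [h, EuclideanSpace.norm_eq]
  apply Real.sqrt_le_sqrt
  simpa [Real.norm_eq_abs, sq_abs] using Finset.single_le_sum (f := fun j => (R j)^2)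
    (fun j _ => sq_nonneg (R j)) (Finset.mem_univ i)

lemma integrableOn_one_sub_sq_rpow (hN : 0 < N) {e : ℝ} (he : -1 < e) :
    IntegrableOn (fun R : EuclideanSpace ℝ (Fin N) => (1 - ‖R‖ ^ 2) ^ e) (ball1 N) := by
  have base := (integrableOn_one_sub_norm_rpow hN he).const_mul (max 1 (2 ^ e))
  rw [ball1]
  apply Integrable.mono' base
  · apply ContinuousOn.aestronglyMeasurable _ Metric.isOpen_ball.measurableSet
    apply ContinuousOn.rpow_const
    · fun_prop
    · intro R hR
      exact Or.inl (one_sub_sq_pos (mem_ball1.2 (by simpa [dist_zero_right] using hR))).ne'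
  · filter_upwards [ae_restrict_mem Metric.isOpen_ball.measurableSet] with R hR
    have hR' : R ∈ ball1 N := by rw [mem_ball1]; simpa [dist_zero_right] using hR
    have h1 : (0:ℝ) < 1 - ‖R‖ := by rw [mem_ball1] at hR'; linarith
    have h2 : (0:ℝ) < 1 + ‖R‖ := by linarith [norm_nonneg R]
    have hfact : (1:ℝ) - ‖R‖ ^ 2 = (1 - ‖R‖) * (1 + ‖R‖) := by ring
    rw [Real.norm_eq_abs, hfact, Real.mul_rpow h1.le h2.le,
      abs_of_nonneg (by positivity)]
    rw [mul_comm ((1 - ‖R‖) ^ e)]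
    apply mul_le_mul_of_nonneg_right _ (Real.rpow_nonneg h1.le e)
    rcases le_or_gt 0 e with h0 | h0
    · calc (1 + ‖R‖) ^ e ≤ (2:ℝ) ^ e := by
            apply Real.rpow_le_rpow h2.le _ h0
            rw [mem_ball1] at hR'; linarith
        _ ≤ max 1 (2 ^ e) := le_max_right _ _
    · calc (1 + ‖R‖) ^ e ≤ 1 :=
            Real.rpow_le_one_of_one_le_of_nonpos (by linarith [norm_nonneg R]) h0.le
        _ ≤ max 1 (2 ^ e) := le_max_left _ _

lemma normalization_pos (hN : 0 < N) (hk : 0 < k) :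
    (0:ℝ) < ∫ R' in ball1 N, (1 - ‖R'‖ ^ 2) ^ k := by
  have hint : IntegrableOn (fun R : EuclideanSpace ℝ (Fin N) => (1 - ‖R‖ ^ 2) ^ k)
      (ball1 N) := integrableOn_one_sub_sq_rpow hN (by linarith)
  rw [setIntegral_pos_iff_support_of_nonneg_ae _ hint]
  · apply lt_of_lt_of_le _ (measure_mono (s := ball1 N) _)
    · rw [ball1]
      exact Metric.measure_ball_pos volume 0 one_pos
    · intro R hR
      refine ⟨?_, hR⟩
      have := Real.rpow_pos_of_pos (one_sub_sq_pos hR) k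
      exact Function.mem_support.2 this.ne'
  · filter_upwards [ae_restrict_mem (by rw [ball1]; exact Metric.isOpen_ball.measurableSet)]
      with R hR
    exact Real.rpow_nonneg (one_sub_sq_pos hR).le k

lemma psiInf_pos (hN : 0 < N) (hk : 0 < k) {R : EuclideanSpace ℝ (Fin N)} (hR : R ∈ ball1 N) :
    0 < psiInf N k R :=
  div_pos (Real.rpow_pos_of_pos (one_sub_sq_pos hR) k) (normalization_pos hN hk)

lemma hasFDerivAt_psiInf (hN : 0 < N) (hk : 0 < k) {R : EuclideanSpace ℝ (Fin N)}
    (hR : R ∈ ball1 N) :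
    HasFDerivAt (psiInf N k)
      (((-(2 * k * (1 - ‖R‖ ^ 2) ^ (k - 1))) / ∫ R' in ball1 N, (1 - ‖R'‖ ^ 2) ^ k) •
        innerSL ℝ R) R := by
  have hpos := one_sub_sq_pos hR
  have h1 : HasFDerivAt (fun R' : EuclideanSpace ℝ (Fin N) => ‖R'‖ ^ 2)
      (2 • (innerSL ℝ R)) R := by
    simpa using (hasFDerivAt_id R).norm_sq
  have h2 : HasFDerivAt (fun R' : EuclideanSpace ℝ (Fin N) => 1 - ‖R'‖ ^ 2)
      (-(2 • (innerSL ℝ R))) R := h1.const_sub 1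
  have h3 := h2.rpow_const (p := k) (Or.inl hpos.ne')
  have h4 := h3.mul_const (∫ R' in ball1 N, (1 - ‖R'‖ ^ 2) ^ k)⁻¹
  have : psiInf N k = fun R' : EuclideanSpace ℝ (Fin N) =>
      (1 - ‖R'‖ ^ 2) ^ k * (∫ R' in ball1 N, (1 - ‖R'‖ ^ 2) ^ k)⁻¹ := by
    funext R'
    rw [psiInf, div_eq_mul_inv]
  rw [this]
  refine HasFDerivAt.congr_fderiv h4 ?_
  ext w
  simp only [ContinuousLinearMap.coe_smul', Pi.smul_apply, smul_eq_mul,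
    ContinuousLinearMap.coe_sub', ContinuousLinearMap.neg_apply, Pi.sub_apply]
  push_cast
  ring_nf

lemma pd_drag (hN : 0 < N) (hk : 0 < k) (L : EuclideanSpace ℝ (Fin N) →L[ℝ] ℝ)
    {R : EuclideanSpace ℝ (Fin N)} (hR : R ∈ ball1 N) (i : Fin N) :
    pd N (fun R' => -(L R') * psiInf N k R') R i
      = -(L (EuclideanSpace.single i 1)) * psiInf N k R
        + L R * (2 * k * R i / (1 - ‖R‖ ^ 2)) * psiInf N k R := by
  have hpos := one_sub_sq_pos hR
  have hc := normalization_pos hN hk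
  have hL : HasFDerivAt (fun R' : EuclideanSpace ℝ (Fin N) => -(L R')) (-L) R :=
    L.hasFDerivAt.neg
  have hP := hasFDerivAt_psiInf hN hk hR
  have hprod := hL.mul hP
  rw [pd, show (fun R' => -(L R') * psiInf N k R') = ((fun R' => -L R') * psiInf N k) from rfl,
    hprod.fderiv]
  have hIP : (innerSL ℝ R) (EuclideanSpace.single i (1:ℝ)) = R i := by
    simp [real_inner_comm, EuclideanSpace.inner_single_right]
  simp only [ContinuousLinearMap.add_apply, ContinuousLinearMap.coe_smul',
    Pi.smul_apply, smul_eq_mul, ContinuousLinearMap.neg_apply, hIP]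
  have hψ : psiInf N k R = (1 - ‖R‖ ^ 2) ^ k / ∫ R' in ball1 N, (1 - ‖R'‖ ^ 2) ^ k := rfl
  have hk1 : (1 - ‖R‖ ^ 2) ^ (k - 1) = (1 - ‖R‖ ^ 2) ^ k / (1 - ‖R‖ ^ 2) := by
    rw [Real.rpow_sub hpos, Real.rpow_one]
  rw [hψ, hk1]
  field_simp
  ring

lemma clm_apply_eq_sum (L : EuclideanSpace ℝ (Fin N) →L[ℝ] ℝ) (R : EuclideanSpace ℝ (Fin N)) :
    L R = ∑ l : Fin N, R l * L (EuclideanSpace.single l 1) := by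
  have hrep : R = ∑ l : Fin N, R l • EuclideanSpace.single l (1:ℝ) := by
    apply PiLp.ext
    intro j
    rw [WithLp.ofLp_sum, Finset.sum_apply]
    simp [EuclideanSpace.single_apply, PiLp.smul_apply]
  conv_lhs => rw [hrep]
  rw [map_sum]
  simp [smul_eq_mul]

end Aux

section Main

open Metric

variable {N : ℕ} {k : ℝ} {ψ : EuclideanSpace ℝ (Fin N) → EuclideanSpace ℝ (Fin N) → ℝ}

lemma hcoord (l : Fin N) : Continuous fun R : EuclideanSpace ℝ (Fin N) => R l := by
  have := (EuclideanSpace.proj (𝕜 := ℝ) l).continuous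
  simpa [PiLp.proj_apply] using this

lemma S_open : IsOpen (Set.univ ×ˢ ball1 N :
    Set (EuclideanSpace ℝ (Fin N) × EuclideanSpace ℝ (Fin N))) := by
  apply isOpen_univ.prod
  rw [ball1]; exact Metric.isOpen_ball

lemma psi_eq (hN : 0 < N) (hk : 0 < k) (x : EuclideanSpace ℝ (Fin N))
    {R : EuclideanSpace ℝ (Fin N)} (hR : R ∈ ball1 N) :
    ψ x R = (ψ x R / psiInf N k R) * psiInf N k R :=
  (div_mul_cancel₀ _ (psiInf_pos hN hk hR).ne').symm

lemma psiInf_contOn (hN : 0 < N) (hk : 0 < k) :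
    ContinuousOn (psiInf N k) (ball1 N) := by
  have : psiInf N k = fun R : EuclideanSpace ℝ (Fin N) =>
      (1 - ‖R‖ ^ 2) ^ k / ∫ R' in ball1 N, (1 - ‖R'‖ ^ 2) ^ k := rfl
  rw [this]
  apply ContinuousOn.div_const
  apply ContinuousOn.rpow_const
  · fun_prop
  · exact fun R hR => Or.inl (one_sub_sq_pos hR).ne'

lemma psi_contOn (hN : 0 < N) (hk : 0 < k)
    (hψ_C1 : ContDiffOn ℝ 1
      (fun q : EuclideanSpace ℝ (Fin N) × EuclideanSpace ℝ (Fin N) =>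
        ψ q.1 q.2 / psiInf N k q.2) (Set.univ ×ˢ ball1 N))
    (x : EuclideanSpace ℝ (Fin N)) :
    ContinuousOn (fun R => ψ x R) (ball1 N) := by
  have hx : Continuous fun R : EuclideanSpace ℝ (Fin N) => (x, R) :=
    continuous_const.prodMk continuous_id
  have h1 : ContinuousOn (fun R : EuclideanSpace ℝ (Fin N) => ψ x R / psiInf N k R)
      (ball1 N) := by
    have h2 := hψ_C1.continuousOn.comp hx.continuousOn (fun R hR => ⟨Set.mem_univ _, hR⟩)
    exact h2
  apply ContinuousOn.congr (h1.mul (psiInf_contOn hN hk))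
  intro R hR
  exact psi_eq hN hk x hR

lemma coef_contOn (hN : 0 < N) (l m : Fin N) :
    ContinuousOn (fun R : EuclideanSpace ℝ (Fin N) =>
      R l * (2 * k * R m / (1 - ‖R‖ ^ 2))) (ball1 N) := by
  apply ContinuousOn.mul ((hcoord l).continuousOn)
  apply ContinuousOn.div
  · exact (continuous_const.mul (hcoord m)).continuousOn
  · fun_prop
  · exact fun R hR => (one_sub_sq_pos hR).ne'

lemma term_bound (hN : 0 < N) (hk : 0 < k) {C : ℝ}
    (hC : ∀ x : EuclideanSpace ℝ (Fin N), ∀ R ∈ ball1 N, |ψ x R / psiInf N k R| ≤ C)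
    (x : EuclideanSpace ℝ (Fin N)) (l m : Fin N)
    {R : EuclideanSpace ℝ (Fin N)} (hR : R ∈ ball1 N) :
    |R l * (2 * k * R m / (1 - ‖R‖ ^ 2)) * ψ x R| ≤
      (C * (2 * k) / ∫ R' in ball1 N, (1 - ‖R'‖ ^ 2) ^ k) * (1 - ‖R‖ ^ 2) ^ (k - 1) := by
  have hs := one_sub_sq_pos hR
  have hcc := normalization_pos hN hk
  have hψpos := psiInf_pos hN hk hR
  have hnorm : ‖R‖ ≤ 1 := by rw [mem_ball1] at hR; linarith
  have h1 : |R l| ≤ 1 := (abs_coord_le_norm R l).trans hnorm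
  have hm : |R m| ≤ 1 := (abs_coord_le_norm R m).trans hnorm
  have hψb : |ψ x R| ≤ C * psiInf N k R := by
    rw [psi_eq (ψ := ψ) hN hk x hR, abs_mul, abs_of_pos hψpos]
    exact mul_le_mul_of_nonneg_right (hC x R hR) hψpos.le
  have h2 : |2 * k * R m / (1 - ‖R‖ ^ 2)| ≤ 2 * k / (1 - ‖R‖ ^ 2) := by
    rw [abs_div, abs_of_pos hs]
    have hnum : |2 * k * R m| ≤ 2 * k := by
      calc |2 * k * R m| = 2 * k * |R m| := by
            rw [abs_mul, abs_of_nonneg (by positivity)]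
        _ ≤ 2 * k * 1 := by gcongr
        _ = 2 * k := mul_one _
    gcongr
  calc |R l * (2 * k * R m / (1 - ‖R‖ ^ 2)) * ψ x R|
      = |R l| * |2 * k * R m / (1 - ‖R‖ ^ 2)| * |ψ x R| := by rw [abs_mul, abs_mul]
    _ ≤ 1 * (2 * k / (1 - ‖R‖ ^ 2)) * (C * psiInf N k R) := by
        have hCnn : 0 ≤ C := (abs_nonneg _).trans (hC x R hR)
        apply mul_le_mul _ hψb (abs_nonneg _) (by positivity)
        exact mul_le_mul h1 h2 (abs_nonneg _) one_pos.le
    _ = (C * (2 * k) / ∫ R' in ball1 N, (1 - ‖R'‖ ^ 2) ^ k) * (1 - ‖R‖ ^ 2) ^ (k - 1) := by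
        have : psiInf N k R = (1 - ‖R‖ ^ 2) ^ k / ∫ R' in ball1 N, (1 - ‖R'‖ ^ 2) ^ k := rfl
        rw [this, Real.rpow_sub hs, Real.rpow_one]
        field_simp

lemma bound_integrable (hN : 0 < N) (hk : 0 < k) (c : ℝ) :
    IntegrableOn (fun R : EuclideanSpace ℝ (Fin N) => c * (1 - ‖R‖ ^ 2) ^ (k - 1))
      (ball1 N) :=
  (integrableOn_one_sub_sq_rpow hN (by linarith)).const_mul c

lemma integrableOn_term (hN : 0 < N) (hk : 0 < k)
    (hψ_C1 : ContDiffOn ℝ 1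
      (fun q : EuclideanSpace ℝ (Fin N) × EuclideanSpace ℝ (Fin N) =>
        ψ q.1 q.2 / psiInf N k q.2) (Set.univ ×ˢ ball1 N))
    {C : ℝ}
    (hC : ∀ x : EuclideanSpace ℝ (Fin N), ∀ R ∈ ball1 N, |ψ x R / psiInf N k R| ≤ C)
    (x : EuclideanSpace ℝ (Fin N)) (l m : Fin N) :
    IntegrableOn (fun R : EuclideanSpace ℝ (Fin N) =>
      R l * (2 * k * R m / (1 - ‖R‖ ^ 2)) * ψ x R) (ball1 N) := by
  apply Integrable.mono' (bound_integrable hN hk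
    (C * (2 * k) / ∫ R' in ball1 N, (1 - ‖R'‖ ^ 2) ^ k))
  · apply ContinuousOn.aestronglyMeasurable _ (by rw [ball1]; exact Metric.isOpen_ball.measurableSet)
    exact (coef_contOn hN l m).mul (psi_contOn hN hk hψ_C1 x)
  · filter_upwards [ae_restrict_mem (by rw [ball1]; exact Metric.isOpen_ball.measurableSet)]
      with R hR
    exact term_bound hN hk hC x l m hR

lemma F'_norm_le (hN : 0 < N) (hk : 0 < k) {C : ℝ} (hCnn : 0 ≤ C)
    (hDG : ‖fderivWithin ℝ (fun q : EuclideanSpace ℝ (Fin N) × EuclideanSpace ℝ (Fin N) =>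
        ψ q.1 q.2 / psiInf N k q.2) (Set.univ ×ˢ ball1 N) (x, R)‖ ≤ C)
    (l m : Fin N) (hR : R ∈ ball1 N) :
    ‖(R l * (2 * k * R m / (1 - ‖R‖ ^ 2)) * psiInf N k R) •
        ((fderivWithin ℝ (fun q : EuclideanSpace ℝ (Fin N) × EuclideanSpace ℝ (Fin N) =>
            ψ q.1 q.2 / psiInf N k q.2) (Set.univ ×ˢ ball1 N) (x, R)).comp
          (ContinuousLinearMap.inl ℝ (EuclideanSpace ℝ (Fin N)) (EuclideanSpace ℝ (Fin N))))‖
      ≤ (C * (2 * k) / ∫ R' in ball1 N, (1 - ‖R'‖ ^ 2) ^ k) * (1 - ‖R‖ ^ 2) ^ (k - 1) := by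
  have hs := one_sub_sq_pos hR
  have hcc := normalization_pos (N := N) hN hk
  have hcoefb := term_bound (ψ := fun _ R' => psiInf N k R') hN hk (C := 1)
    (fun x' R' hR' => by rw [div_self (psiInf_pos hN hk hR').ne']; simp) x l m hR
  have hinl : ‖(ContinuousLinearMap.inl ℝ (EuclideanSpace ℝ (Fin N))
      (EuclideanSpace ℝ (Fin N)))‖ ≤ 1 := by
    apply ContinuousLinearMap.opNorm_le_bound _ zero_le_one
    intro w
    rw [ContinuousLinearMap.inl_apply, one_mul, Prod.norm_def]
    simp
  have hcompn : ‖(fderivWithin ℝ (fun q : EuclideanSpace ℝ (Fin N) × EuclideanSpace ℝ (Fin N) =>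
      ψ q.1 q.2 / psiInf N k q.2) (Set.univ ×ˢ ball1 N) (x, R)).comp
        (ContinuousLinearMap.inl ℝ (EuclideanSpace ℝ (Fin N)) (EuclideanSpace ℝ (Fin N)))‖
      ≤ C * 1 := by
    apply le_trans (ContinuousLinearMap.opNorm_comp_le _ _)
    exact mul_le_mul hDG hinl (norm_nonneg _) hCnn
  calc ‖(R l * (2 * k * R m / (1 - ‖R‖ ^ 2)) * psiInf N k R) •
        ((fderivWithin ℝ (fun q : EuclideanSpace ℝ (Fin N) × EuclideanSpace ℝ (Fin N) =>
            ψ q.1 q.2 / psiInf N k q.2) (Set.univ ×ˢ ball1 N) (x, R)).comp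
          (ContinuousLinearMap.inl ℝ (EuclideanSpace ℝ (Fin N)) (EuclideanSpace ℝ (Fin N))))‖
      ≤ |R l * (2 * k * R m / (1 - ‖R‖ ^ 2)) * psiInf N k R| *
        ‖(fderivWithin ℝ (fun q : EuclideanSpace ℝ (Fin N) × EuclideanSpace ℝ (Fin N) =>
            ψ q.1 q.2 / psiInf N k q.2) (Set.univ ×ˢ ball1 N) (x, R)).comp
          (ContinuousLinearMap.inl ℝ (EuclideanSpace ℝ (Fin N)) (EuclideanSpace ℝ (Fin N)))‖ := by
        rw [← Real.norm_eq_abs]; exact norm_smul_le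
          (R l * (2 * k * R m / (1 - ‖R‖ ^ 2)) * psiInf N k R)
          ((fderivWithin ℝ (fun q : EuclideanSpace ℝ (Fin N) × EuclideanSpace ℝ (Fin N) =>
            ψ q.1 q.2 / psiInf N k q.2) (Set.univ ×ˢ ball1 N) (x, R)).comp
          (ContinuousLinearMap.inl ℝ (EuclideanSpace ℝ (Fin N)) (EuclideanSpace ℝ (Fin N))))
    _ ≤ ((1 * (2 * k) / ∫ R' in ball1 N, (1 - ‖R'‖ ^ 2) ^ k) * (1 - ‖R‖ ^ 2) ^ (k - 1)) *
        (C * 1) := by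
        apply mul_le_mul hcoefb hcompn (norm_nonneg _)
        apply mul_nonneg (div_nonneg (by positivity) hcc.le) (Real.rpow_nonneg hs.le _)
    _ = (C * (2 * k) / ∫ R' in ball1 N, (1 - ‖R'‖ ^ 2) ^ k) * (1 - ‖R‖ ^ 2) ^ (k - 1) := by
        ring

variable (ψ) in
lemma hasFDerivAt_T (hN : 0 < N) (hk : 0 < k)
    (hψ_C1 : ContDiffOn ℝ 1
      (fun q : EuclideanSpace ℝ (Fin N) × EuclideanSpace ℝ (Fin N) =>
        ψ q.1 q.2 / psiInf N k q.2) (Set.univ ×ˢ ball1 N))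
    {C : ℝ}
    (hC : ∀ x : EuclideanSpace ℝ (Fin N), ∀ R ∈ ball1 N,
      |ψ x R / psiInf N k R| ≤ C ∧
      ‖fderivWithin ℝ (fun q : EuclideanSpace ℝ (Fin N) × EuclideanSpace ℝ (Fin N) =>
          ψ q.1 q.2 / psiInf N k q.2) (Set.univ ×ˢ ball1 N) (x, R)‖ ≤ C)
    (l m : Fin N) (x₀ : EuclideanSpace ℝ (Fin N)) :
    HasFDerivAt (fun y => ∫ R in ball1 N, R l * (2 * k * R m / (1 - ‖R‖ ^ 2)) * ψ y R)
      (∫ R in ball1 N, (R l * (2 * k * R m / (1 - ‖R‖ ^ 2)) * psiInf N k R) •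
        ((fderivWithin ℝ (fun q : EuclideanSpace ℝ (Fin N) × EuclideanSpace ℝ (Fin N) =>
            ψ q.1 q.2 / psiInf N k q.2) (Set.univ ×ˢ ball1 N) (x₀, R)).comp
          (ContinuousLinearMap.inl ℝ (EuclideanSpace ℝ (Fin N)) (EuclideanSpace ℝ (Fin N)))))
      x₀ := by
  have hmesB : MeasurableSet (ball1 N) := by rw [ball1]; exact Metric.isOpen_ball.measurableSet
  have hSopen : IsOpen (Set.univ ×ˢ ball1 N :
      Set (EuclideanSpace ℝ (Fin N) × EuclideanSpace ℝ (Fin N))) := S_open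
  have hCnn : 0 ≤ C := (abs_nonneg _).trans
    (hC x₀ 0 (by rw [mem_ball1]; simp)).1
  apply hasFDerivAt_integral_of_dominated_of_fderiv_le
    (F' := fun x R => (R l * (2 * k * R m / (1 - ‖R‖ ^ 2)) * psiInf N k R) •
      ((fderivWithin ℝ (fun q : EuclideanSpace ℝ (Fin N) × EuclideanSpace ℝ (Fin N) =>
          ψ q.1 q.2 / psiInf N k q.2) (Set.univ ×ˢ ball1 N) (x, R)).comp
        (ContinuousLinearMap.inl ℝ (EuclideanSpace ℝ (Fin N)) (EuclideanSpace ℝ (Fin N)))))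
    (bound := fun R => (C * (2 * k) / ∫ R' in ball1 N, (1 - ‖R'‖ ^ 2) ^ k) *
      (1 - ‖R‖ ^ 2) ^ (k - 1))
    (s := Metric.ball x₀ 1) (Metric.ball_mem_nhds x₀ one_pos)
  · exact Filter.Eventually.of_forall fun x =>
      (integrableOn_term hN hk hψ_C1 (fun x R hR => (hC x R hR).1) x l m).aestronglyMeasurable
  · exact integrableOn_term hN hk hψ_C1 (fun x R hR => (hC x R hR).1) x₀ l m
  · apply ContinuousOn.aestronglyMeasurable _ hmesB
    apply ContinuousOn.smul ((coef_contOn hN l m).mul (psiInf_contOn hN hk))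
    apply ContinuousOn.clm_comp _ continuousOn_const
    have h1 : ContinuousOn (fderivWithin ℝ
        (fun q : EuclideanSpace ℝ (Fin N) × EuclideanSpace ℝ (Fin N) =>
          ψ q.1 q.2 / psiInf N k q.2) (Set.univ ×ˢ ball1 N)) (Set.univ ×ˢ ball1 N) :=
      hψ_C1.continuousOn_fderivWithin hSopen.uniqueDiffOn le_rfl
    have hx : Continuous fun R : EuclideanSpace ℝ (Fin N) => (x₀, R) :=
      continuous_const.prodMk continuous_id
    have h2 := h1.comp hx.continuousOn (fun R hR => ⟨Set.mem_univ _, hR⟩)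
    exact h2
  · filter_upwards [ae_restrict_mem hmesB] with R hR
    intro x _
    exact F'_norm_le hN hk hCnn (hC x R hR).2 l m hR
  · exact bound_integrable hN hk _
  · filter_upwards [ae_restrict_mem hmesB] with R hR
    intro x _
    have hmem : (x, R) ∈ (Set.univ ×ˢ ball1 N :
        Set (EuclideanSpace ℝ (Fin N) × EuclideanSpace ℝ (Fin N))) := ⟨Set.mem_univ _, hR⟩
    have hGdiff : DifferentiableAt ℝ
        (fun q : EuclideanSpace ℝ (Fin N) × EuclideanSpace ℝ (Fin N) =>
          ψ q.1 q.2 / psiInf N k q.2) (x, R) :=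
      ((hψ_C1.differentiableOn one_ne_zero) (x, R) hmem).differentiableAt (hSopen.mem_nhds hmem)
    have hj : HasFDerivAt (fun y : EuclideanSpace ℝ (Fin N) => (y, R))
        (ContinuousLinearMap.inl ℝ (EuclideanSpace ℝ (Fin N)) (EuclideanSpace ℝ (Fin N))) x := by
      have heq : (ContinuousLinearMap.inl ℝ (EuclideanSpace ℝ (Fin N))
          (EuclideanSpace ℝ (Fin N)))
          = (ContinuousLinearMap.id ℝ (EuclideanSpace ℝ (Fin N))).prod 0 := by
        ext w <;> simp
      rw [heq]
      exact (hasFDerivAt_id x).prodMk (hasFDerivAt_const R x)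
    have hcomp := (hGdiff.hasFDerivAt).comp x hj
    have hconst := hcomp.const_mul (R l * (2 * k * R m / (1 - ‖R‖ ^ 2)) * psiInf N k R)
    have hfun : (fun y => R l * (2 * k * R m / (1 - ‖R‖ ^ 2)) * ψ y R)
        = fun y => (R l * (2 * k * R m / (1 - ‖R‖ ^ 2)) * psiInf N k R) *
          (ψ y R / psiInf N k R) := by
      funext y
      have hne : psiInf N k R ≠ 0 := (psiInf_pos hN hk hR).ne'
      calc R l * (2 * k * R m / (1 - ‖R‖ ^ 2)) * ψ y R
          = R l * (2 * k * R m / (1 - ‖R‖ ^ 2)) * ((ψ y R / psiInf N k R) * psiInf N k R) := by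
            rw [div_mul_cancel₀ _ hne]
        _ = R l * (2 * k * R m / (1 - ‖R‖ ^ 2)) * psiInf N k R * (ψ y R / psiInf N k R) := by
            ring
    rw [fderivWithin_of_isOpen hSopen hmem]
    rw [hfun]
    exact hconst

lemma inner_integrand_eq (hN : 0 < N) (hk : 0 < k)
    (L : Fin N → (EuclideanSpace ℝ (Fin N) →L[ℝ] ℝ))
    (hdiv : ∑ i : Fin N, L i (EuclideanSpace.single i 1) = 0)
    (ψx : EuclideanSpace ℝ (Fin N) → ℝ)
    {R : EuclideanSpace ℝ (Fin N)} (hR : R ∈ ball1 N) :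
    (∑ i : Fin N, pd N (fun R' => -(L i R') * psiInf N k R') R i) * (ψx R / psiInf N k R)
      = ∑ i : Fin N, ∑ l : Fin N, L i (EuclideanSpace.single l 1) *
          (R l * (2 * k * R i / (1 - ‖R‖ ^ 2)) * ψx R) := by
  have hψpos := psiInf_pos (N := N) hN hk hR
  have hq' : psiInf N k R * (ψx R / psiInf N k R) = ψx R := by
    rw [mul_comm]; exact div_mul_cancel₀ _ hψpos.ne'
  have key : ∀ i : Fin N,
      pd N (fun R' => -(L i R') * psiInf N k R') R i * (ψx R / psiInf N k R)
      = -(L i (EuclideanSpace.single i 1)) * psiInf N k R * (ψx R / psiInf N k R)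
        + ∑ l : Fin N, L i (EuclideanSpace.single l 1) *
            (R l * (2 * k * R i / (1 - ‖R‖ ^ 2)) * ψx R) := by
    intro i
    rw [pd_drag hN hk (L i) hR, add_mul]
    congr 1
    rw [clm_apply_eq_sum (L i) R, Finset.sum_mul, Finset.sum_mul, Finset.sum_mul]
    apply Finset.sum_congr rfl
    intro l _
    linear_combination (R l * L i (EuclideanSpace.single l 1) *
      (2 * k * R i / (1 - ‖R‖ ^ 2))) * hq'
  rw [Finset.sum_mul]
  simp only [key]
  rw [Finset.sum_add_distrib]
  have h0 : ∑ i : Fin N, -(L i (EuclideanSpace.single i 1)) * psiInf N k R *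
      (ψx R / psiInf N k R) = 0 := by
    rw [← Finset.sum_mul, ← Finset.sum_mul]
    have : ∑ i : Fin N, -(L i (EuclideanSpace.single i 1)) = 0 := by
      rw [Finset.sum_neg_distrib, hdiv, neg_zero]
    rw [this, zero_mul, zero_mul]
  rw [h0, zero_add]

variable (ψ) in
lemma T_abs_le (hN : 0 < N) (hk : 0 < k)
    (hψ_C1 : ContDiffOn ℝ 1
      (fun q : EuclideanSpace ℝ (Fin N) × EuclideanSpace ℝ (Fin N) =>
        ψ q.1 q.2 / psiInf N k q.2) (Set.univ ×ˢ ball1 N))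
    {C : ℝ}
    (hC : ∀ x : EuclideanSpace ℝ (Fin N), ∀ R ∈ ball1 N, |ψ x R / psiInf N k R| ≤ C)
    (l m : Fin N) (x : EuclideanSpace ℝ (Fin N)) :
    |∫ R in ball1 N, R l * (2 * k * R m / (1 - ‖R‖ ^ 2)) * ψ x R|
      ≤ ∫ R in ball1 N, (C * (2 * k) / ∫ R' in ball1 N, (1 - ‖R'‖ ^ 2) ^ k) *
          (1 - ‖R‖ ^ 2) ^ (k - 1) := by
  rw [← Real.norm_eq_abs]
  apply norm_integral_le_of_norm_le (bound_integrable hN hk _)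
  filter_upwards [ae_restrict_mem (by rw [ball1]; exact Metric.isOpen_ball.measurableSet)]
    with R hR
  rw [Real.norm_eq_abs]
  exact term_bound hN hk hC x l m hR

variable (ψ) in
lemma T_fderiv_le (hN : 0 < N) (hk : 0 < k)
    (hψ_C1 : ContDiffOn ℝ 1
      (fun q : EuclideanSpace ℝ (Fin N) × EuclideanSpace ℝ (Fin N) =>
        ψ q.1 q.2 / psiInf N k q.2) (Set.univ ×ˢ ball1 N))
    {C : ℝ}
    (hC : ∀ x : EuclideanSpace ℝ (Fin N), ∀ R ∈ ball1 N,
      |ψ x R / psiInf N k R| ≤ C ∧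
      ‖fderivWithin ℝ (fun q : EuclideanSpace ℝ (Fin N) × EuclideanSpace ℝ (Fin N) =>
          ψ q.1 q.2 / psiInf N k q.2) (Set.univ ×ˢ ball1 N) (x, R)‖ ≤ C)
    (l m : Fin N) (x : EuclideanSpace ℝ (Fin N)) :
    ‖fderiv ℝ (fun y => ∫ R in ball1 N, R l * (2 * k * R m / (1 - ‖R‖ ^ 2)) * ψ y R) x‖
      ≤ ∫ R in ball1 N, (C * (2 * k) / ∫ R' in ball1 N, (1 - ‖R'‖ ^ 2) ^ k) *
          (1 - ‖R‖ ^ 2) ^ (k - 1) := by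
  have hCnn : 0 ≤ C := (abs_nonneg _).trans (hC x 0 (by rw [mem_ball1]; simp)).1
  rw [(hasFDerivAt_T ψ hN hk hψ_C1 hC l m x).fderiv]
  apply norm_integral_le_of_norm_le (bound_integrable hN hk _)
  filter_upwards [ae_restrict_mem (by rw [ball1]; exact Metric.isOpen_ball.measurableSet)]
    with R hR
  exact F'_norm_le hN hk hCnn (hC x R hR).2 l m hR

lemma integrable_of_bounded_support {f : EuclideanSpace ℝ (Fin N) → ℝ}
    {K : Set (EuclideanSpace ℝ (Fin N))}
    (hK : IsCompact K) (h0 : ∀ x ∉ K, f x = 0)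
    (hmeas : AEStronglyMeasurable f (volume : Measure (EuclideanSpace ℝ (Fin N))))
    {M : ℝ} (hM : ∀ x, |f x| ≤ M) :
    Integrable f (volume : Measure (EuclideanSpace ℝ (Fin N))) := by
  have hind : f = K.indicator f := by
    funext x
    by_cases hx : x ∈ K
    · simp [Set.indicator_apply, hx]
    · simp [Set.indicator_apply, hx, h0 x hx]
  rw [hind, integrable_indicator_iff hK.measurableSet]
  exact Measure.integrableOn_of_bounded hK.measure_lt_top.ne hmeas
    (ae_of_all _ fun x => by rw [Real.norm_eq_abs]; exact hM x)

end Main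

end AuxProofs

/-- Cancellation identity between the linear drag term and the stress term:
for divergence-free `u` and suitable `ψ`,
`∫_{ℝ^N}∫_B div_R(-(∇u)R ψ∞) (ψ/ψ∞) dR dx = -∫_{ℝ^N} (div τ) · u dx`. -/
theorem drag_stress_cancellation (N : ℕ) (hN : 2 ≤ N) (k : ℝ) (hk : 0 < k)
    (u : EuclideanSpace ℝ (Fin N) → EuclideanSpace ℝ (Fin N))
    (hu_smooth : ContDiff ℝ (⊤ : ℕ∞) u) (hu_supp : HasCompactSupport u)
    (hu_div : ∀ x, ∑ i : Fin N, pd N (fun y => u y i) x i = 0)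
    (ψ : EuclideanSpace ℝ (Fin N) → EuclideanSpace ℝ (Fin N) → ℝ)
    (hψ_C1 : ContDiffOn ℝ 1
      (fun q : EuclideanSpace ℝ (Fin N) × EuclideanSpace ℝ (Fin N) =>
        ψ q.1 q.2 / psiInf N k q.2) (Set.univ ×ˢ ball1 N))
    (hψ_bdd : ∃ C : ℝ, ∀ x : EuclideanSpace ℝ (Fin N), ∀ R ∈ ball1 N,
      |ψ x R / psiInf N k R| ≤ C ∧
      ‖fderivWithin ℝ
        (fun q : EuclideanSpace ℝ (Fin N) × EuclideanSpace ℝ (Fin N) =>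
          ψ q.1 q.2 / psiInf N k q.2) (Set.univ ×ˢ ball1 N) (x, R)‖ ≤ C)
    (hψ_supp : ∃ K : Set (EuclideanSpace ℝ (Fin N)), IsCompact K ∧
      ∀ x ∉ K, ∀ R, ψ x R = 0) :
    (∫ x, ∫ R in ball1 N,
        (∑ i : Fin N, pd N (fun R' =>
            -((fderiv ℝ (fun y => u y i) x) R') * psiInf N k R') R i)
          * (ψ x R / psiInf N k R))
      = -∫ x, ∑ m : Fin N,
          (∑ l : Fin N, fderiv ℝ (fun y =>
              ∫ R in ball1 N, R l * (2 * k * R m / (1 - ‖R‖ ^ 2)) * ψ y R) x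
            (EuclideanSpace.single l 1)) * u x m := by
    classical
  have hN0 : 0 < N := by omega
  obtain ⟨C, hC⟩ := hψ_bdd
  obtain ⟨K, hKcomp, hKpsi⟩ := hψ_supp
  have hC1 : ∀ x : EuclideanSpace ℝ (Fin N), ∀ R ∈ ball1 N,
      |ψ x R / psiInf N k R| ≤ C := fun x R hR => (hC x R hR).1
  have hmesB : MeasurableSet (ball1 N) := by rw [ball1]; exact Metric.isOpen_ball.measurableSet
  -- notation for the stress tensor entries
  set T : Fin N → Fin N → EuclideanSpace ℝ (Fin N) → ℝ :=
    fun l m y => ∫ R in ball1 N, R l * (2 * k * R m / (1 - ‖R‖ ^ 2)) * ψ y R with hTdef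
  have hTlam : ∀ l m : Fin N,
      (fun y => ∫ R in ball1 N, R l * (2 * k * R m / (1 - ‖R‖ ^ 2)) * ψ y R) = T l m :=
    fun l m => rfl
  -- basic facts on u
  have hu1 : ContDiff ℝ 1 u := hu_smooth.of_le (by simp)
  have hui : ∀ i : Fin N, ContDiff ℝ 1 (fun y => u y i) := by
    intro i
    have h := (EuclideanSpace.proj (𝕜 := ℝ) i).contDiff.comp hu1
    exact h
  have hudiff : ∀ i : Fin N, Differentiable ℝ (fun y => u y i) :=
    fun i => (hui i).differentiable one_ne_zero
  have hLcont : ∀ i l : Fin N, Continuous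
      (fun x => fderiv ℝ (fun y => u y i) x (EuclideanSpace.single l 1)) :=
    fun i l => ((hui i).continuous_fderiv one_ne_zero).clm_apply continuous_const
  have hucont : ∀ i : Fin N, Continuous (fun y => u y i) := fun i => (hui i).continuous
  -- T facts
  have hTd : ∀ (l m : Fin N) x, HasFDerivAt (T l m) _ x :=
    fun l m x => hasFDerivAt_T ψ hN0 hk hψ_C1 hC l m x
  have hTdiff : ∀ l m : Fin N, Differentiable ℝ (T l m) :=
    fun l m x => (hTd l m x).differentiableAt
  have hTcont : ∀ l m : Fin N, Continuous (T l m) := fun l m => (hTdiff l m).continuous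
  set CB : ℝ := ∫ R in ball1 N, (C * (2 * k) / ∫ R' in ball1 N, (1 - ‖R'‖ ^ 2) ^ k) *
      (1 - ‖R‖ ^ 2) ^ (k - 1) with hCBdef
  have hTb : ∀ (l m : Fin N) x, |T l m x| ≤ CB :=
    fun l m x => T_abs_le ψ hN0 hk hψ_C1 hC1 l m x
  have hTfb : ∀ (l m : Fin N) x, ‖fderiv ℝ (T l m) x‖ ≤ CB := by
    intro l m x
    have := T_fderiv_le ψ hN0 hk hψ_C1 hC l m x
    rw [hTlam] at this
    exact this
  have hT0 : ∀ (l m : Fin N) x, x ∉ K → T l m x = 0 := by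
    intro l m x hx
    rw [hTdef]
    simp only [hKpsi x hx, mul_zero]
    exact integral_zero _ _
  have hTf0 : ∀ (l m : Fin N) x, x ∉ K → fderiv ℝ (T l m) x = 0 := by
    intro l m x hx
    have hopen : IsOpen Kᶜ := hKcomp.isClosed.isOpen_compl
    have hev : T l m =ᶠ[nhds x] (fun _ => (0 : ℝ)) :=
      Filter.eventuallyEq_of_mem (hopen.mem_nhds hx) (fun y hy => hT0 l m y hy)
    rw [hev.fderiv_eq, fderiv_fun_const]
    simp
  -- u bound
  obtain ⟨Mu, hMu⟩ : ∃ Mu : ℝ, ∀ x, ‖u x‖ ≤ Mu := by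
    obtain ⟨Mu, hMu'⟩ :=
      (hu_smooth.continuous.norm).bounded_above_of_compact_support hu_supp.norm
    exact ⟨Mu, fun x => by simpa using hMu' x⟩
  have hucoord : ∀ x (i : Fin N), |u x i| ≤ Mu :=
    fun x i => (abs_coord_le_norm (u x) i).trans (hMu x)
  -- integrability of the products appearing in the integration by parts
  have hint1 : ∀ l m : Fin N,
      Integrable (fun x => u x m * fderiv ℝ (T l m) x (EuclideanSpace.single l 1)) := by
    intro l m
    apply integrable_of_bounded_support hKcomp
      (fun x hx => by simp [hTf0 l m x hx])
      (((hucont m).aestronglyMeasurable).mul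
        ((measurable_fderiv_apply_const ℝ (T l m) _).aestronglyMeasurable))
      (M := Mu * CB)
    intro x
    show |u x m * fderiv ℝ (T l m) x (EuclideanSpace.single l 1)| ≤ Mu * CB
    rw [abs_mul]
    apply mul_le_mul (hucoord x m) _ (abs_nonneg _)
      ((abs_nonneg _).trans (hucoord x m))
    calc |fderiv ℝ (T l m) x (EuclideanSpace.single l 1)|
        ≤ ‖fderiv ℝ (T l m) x‖ * ‖EuclideanSpace.single l (1:ℝ)‖ :=
          (fderiv ℝ (T l m) x).le_opNorm _
      _ = ‖fderiv ℝ (T l m) x‖ := by rw [EuclideanSpace.norm_single]; simp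
      _ ≤ CB := hTfb l m x
  have hint2 : ∀ l m : Fin N,
      Integrable (fun x => fderiv ℝ (fun y => u y m) x (EuclideanSpace.single l 1) * T l m x) := by
    intro l m
    apply Continuous.integrable_of_hasCompactSupport ((hLcont m l).mul (hTcont l m))
    apply HasCompactSupport.intro hKcomp
    intro x hx
    rw [Pi.mul_apply, hT0 l m x hx, mul_zero]
  have hint3 : ∀ l m : Fin N, Integrable (fun x => u x m * T l m x) := by
    intro l m
    apply Continuous.integrable_of_hasCompactSupport ((hucont m).mul (hTcont l m))
    apply HasCompactSupport.intro hKcomp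
    intro x hx
    rw [Pi.mul_apply, hT0 l m x hx, mul_zero]
  -- integration by parts in x
  have hibp : ∀ l m : Fin N,
      ∫ x, u x m * fderiv ℝ (T l m) x (EuclideanSpace.single l 1)
        = -∫ x, fderiv ℝ (fun y => u y m) x (EuclideanSpace.single l 1) * T l m x :=
    fun l m => integral_mul_fderiv_eq_neg_fderiv_mul_of_integrable
      (hint2 l m) (hint1 l m) (hint3 l m) (fun x _ => hudiff m x) (fun x _ => hTdiff l m x)
  -- inner integral identity
  have hinner : ∀ x, (∫ R in ball1 N,
        (∑ i : Fin N, pd N (fun R' =>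
            -((fderiv ℝ (fun y => u y i) x) R') * psiInf N k R') R i)
          * (ψ x R / psiInf N k R))
      = ∑ i : Fin N, ∑ l : Fin N,
          (fderiv ℝ (fun y => u y i) x) (EuclideanSpace.single l 1) * T l i x := by
    intro x
    rw [setIntegral_congr_fun hmesB (g := fun R => ∑ i : Fin N, ∑ l : Fin N,
        (fderiv ℝ (fun y => u y i) x) (EuclideanSpace.single l 1) *
          (R l * (2 * k * R i / (1 - ‖R‖ ^ 2)) * ψ x R))
      (fun R hR => inner_integrand_eq hN0 hk
        (fun i => fderiv ℝ (fun y => u y i) x) (hu_div x) (fun R' => ψ x R') hR)]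
    rw [integral_finset_sum _ (fun i _ => integrable_finset_sum _
      (fun l _ => (integrableOn_term hN0 hk hψ_C1 hC1 x l i).const_mul _))]
    refine Finset.sum_congr rfl fun i _ => ?_
    rw [integral_finset_sum _ (fun l _ =>
      (integrableOn_term hN0 hk hψ_C1 hC1 x l i).const_mul _)]
    refine Finset.sum_congr rfl fun l _ => ?_
    exact integral_const_mul _ _
  -- integrability with factors in the other order
  have hint1' : ∀ l m : Fin N, Integrable
      (fun x => fderiv ℝ (T l m) x (EuclideanSpace.single l 1) * u x m) :=
    fun l m => (hint1 l m).congr (ae_of_all _ fun x => mul_comm _ _)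
  -- per-term integration by parts, in the orientation we need
  have hterm : ∀ l m : Fin N,
      ∫ x, fderiv ℝ (T l m) x (EuclideanSpace.single l 1) * u x m
        = -∫ x, fderiv ℝ (fun y => u y m) x (EuclideanSpace.single l 1) * T l m x := by
    intro l m
    rw [← hibp l m]
    exact integral_congr_ae (ae_of_all _ fun x => mul_comm _ _)
  -- rewrite the right-hand side
  have hRHS : ∫ x, ∑ m : Fin N,
        (∑ l : Fin N, fderiv ℝ (fun y =>
            ∫ R in ball1 N, R l * (2 * k * R m / (1 - ‖R‖ ^ 2)) * ψ y R) x
          (EuclideanSpace.single l 1)) * u x m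
      = ∑ m : Fin N, ∑ l : Fin N,
          ∫ x, fderiv ℝ (T l m) x (EuclideanSpace.single l 1) * u x m := by
    simp only [hTlam]
    have hpt : ∀ x, (∑ m : Fin N,
          (∑ l : Fin N, fderiv ℝ (T l m) x (EuclideanSpace.single l 1)) * u x m)
        = ∑ m : Fin N, ∑ l : Fin N,
            fderiv ℝ (T l m) x (EuclideanSpace.single l 1) * u x m :=
      fun x => Finset.sum_congr rfl fun m _ => Finset.sum_mul _ _ _
    rw [integral_congr_ae (ae_of_all _ hpt)]
    rw [integral_finset_sum _ (fun m _ => integrable_finset_sum _ (fun l _ => hint1' l m))]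
    exact Finset.sum_congr rfl fun m _ => integral_finset_sum _ (fun l _ => hint1' l m)
  calc (∫ x, ∫ R in ball1 N,
        (∑ i : Fin N, pd N (fun R' =>
            -((fderiv ℝ (fun y => u y i) x) R') * psiInf N k R') R i)
          * (ψ x R / psiInf N k R))
      = ∫ x, ∑ i : Fin N, ∑ l : Fin N,
          (fderiv ℝ (fun y => u y i) x) (EuclideanSpace.single l 1) * T l i x :=
        integral_congr_ae (ae_of_all _ hinner)
    _ = ∑ i : Fin N, ∑ l : Fin N,
          ∫ x, (fderiv ℝ (fun y => u y i) x) (EuclideanSpace.single l 1) * T l i x := by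
        rw [integral_finset_sum _ (fun i _ => integrable_finset_sum _ (fun l _ => hint2 l i))]
        exact Finset.sum_congr rfl fun i _ => integral_finset_sum _ (fun l _ => hint2 l i)
    _ = -∫ x, ∑ m : Fin N,
          (∑ l : Fin N, fderiv ℝ (fun y =>
              ∫ R in ball1 N, R l * (2 * k * R m / (1 - ‖R‖ ^ 2)) * ψ y R) x
            (EuclideanSpace.single l 1)) * u x m := by
        rw [hRHS]
        simp only [hterm]
        rw [← Finset.sum_neg_distrib]
        refine Finset.sum_congr rfl fun m _ => ?_
        rw [← Finset.sum_neg_distrib]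
        exact Finset.sum_congr rfl fun l _ => (neg_neg _).symm
end
end
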